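/- arXiv:1505.04294 — 8 statements merged into one kernel-verified Lean document; each statement's English description precedes it below -/
import Mathlib

section
/- For any positive integer b and prime p, the function x ↦ (x choose b) mod p is periodic in x with period p^(v_p(b!)+1), where v_p denotes the p-adic valuation. That is, for all natural numbers x, (x + p^(v_p(b!)+1)) choose b ≡ x choose b (mod p). -/
open Polynomial in
lemma eval_int_modEq (P : Polynomial ℤ) {a b n : ℤ} (h : a ≡ b [ZMOD n]) :
    P.eval a ≡ P.eval b [ZMOD n] := by
  induction P using Polynomial.induction_on' with
  | add p q hp hq => simpa [Polynomial.eval_add] using hp.add hq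
  | monomial k c => simpa [Polynomial.eval_monomial] using (h.pow _).mul_left c

/-- For a prime `p` and a positive integer `b`, the function `x ↦ (x choose b) mod p`
is periodic in `x` with period `p ^ (v_p(b!) + 1)`. -/
theorem binomial_mod_p_periodic (p b : ℕ) (hp : p.Prime) (hb : 0 < b) (x : ℕ) :
    Nat.choose (x + p ^ (padicValNat p (Nat.factorial b) + 1)) b ≡ Nat.choose x b [MOD p] := by
  set v := padicValNat p (Nat.factorial b) with hv
  set N := p ^ (v + 1) with hN
  have hmod : ((x + N : ℕ) : ℤ) ≡ (x : ℤ) [ZMOD (N : ℤ)] :=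
    Int.modEq_iff_dvd.mpr ⟨-1, by push_cast; ring⟩
  have hdesc : (((x + N).descFactorial b : ℕ) : ℤ) ≡ ((x.descFactorial b : ℕ) : ℤ)
      [ZMOD (N : ℤ)] := by
    have := eval_int_modEq (descPochhammer ℤ b) hmod
    rwa [descPochhammer_eval_eq_descFactorial, descPochhammer_eval_eq_descFactorial] at this
  rw [Nat.descFactorial_eq_factorial_mul_choose, Nat.descFactorial_eq_factorial_mul_choose] at hdesc
  have hdvd : ((N : ℕ) : ℤ) ∣ (b.factorial : ℤ) * ((x.choose b : ℤ) - ((x + N).choose b : ℤ)) := by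
    have := hdesc.dvd
    push_cast at this ⊢
    rw [← mul_sub] at this
    exact this
  -- factor b! = p^v * m with p ∤ m
  set m := b.factorial / p ^ v with hm
  have hfac : b.factorial = p ^ v * m := by
    rw [hm, hv, ← Nat.factorization_def _ hp]
    exact (Nat.ordProj_mul_ordCompl_eq_self b.factorial p).symm
  have hpm : ¬ (p ∣ m) := by
    rw [hm, hv, ← Nat.factorization_def _ hp]
    exact Nat.not_dvd_ordCompl hp b.factorial_pos.ne'
  have hpd : ((p : ℕ) : ℤ) ∣ ((x.choose b : ℤ) - ((x + N).choose b : ℤ)) := by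
    rw [hfac] at hdvd
    have hN' : ((N : ℕ) : ℤ) = (p : ℤ) ^ v * (p : ℤ) := by
      rw [hN]; push_cast; ring
    rw [hN', Nat.cast_mul, Nat.cast_pow, mul_assoc] at hdvd
    have hcancel : (p : ℤ) ∣ (m : ℤ) * ((x.choose b : ℤ) - ((x + N).choose b : ℤ)) :=
      (mul_dvd_mul_iff_left (pow_ne_zero v (by exact_mod_cast hp.ne_zero))).mp hdvd
    have hprime : Prime ((p : ℕ) : ℤ) := Int.prime_iff_natAbs_prime.mpr (by simpa using hp)
    rcases hprime.dvd_mul.mp hcancel with h | h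
    · exact absurd (Int.natCast_dvd_natCast.mp h) hpm
    · exact h
  exact (Nat.modEq_iff_dvd).mpr hpd
end

section
/- Fix natural numbers m ≤ n, a ≤ n, and u > 0. Define an equivalence relation on the set D_{m,n} of m-element subsets of {1,...,n} (identified with strictly increasing functions f : {1,...,m} → {1,...,n}) by f₁ ≡ f₂ iff f₁ ∩ {1,...,n-a} = f₂ ∩ {1,...,n-a} and f₁(j) ≡ f₂(j) (mod u) for all j ∈ {1,...,m}. Then every equivalence class δ that contains some subset not contained in {1,...,n-a} has cardinality |δ| = C(⌊a/u⌋ - s + b, b) for some integers b, s with 0 < b ≤ m and 0 ≤ s ≤ b. -/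
/-- `D_{m,n}`: the `m`-element subsets of `{1,...,n}`. -/
def Dmn (m n : ℕ) : Finset (Finset ℕ) := (Finset.Icc 1 n).powersetCard m

/-- The equivalence relation `≡ᵘₐ`: `f₁ ≡ f₂` iff they have the same intersection with
`{1,...,n-a}` and their `j`-th elements (in increasing order) are congruent mod `u`. -/
def EqvRel (n a u : ℕ) (f₁ f₂ : Finset ℕ) : Prop :=
  f₁ ∩ Finset.Icc 1 (n - a) = f₂ ∩ Finset.Icc 1 (n - a) ∧
  List.Forall₂ (fun x y => x ≡ y [MOD u]) (f₁.sort (· ≤ ·)) (f₂.sort (· ≤ ·))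

/-!
Members of the class of `f₀` share its low part `f₀ ∩ {1, …, n-a}`, so the class is parametrised
by the high parts: the `b`-subsets `h₀ < ⋯ < h_{b-1}` of `{t, …, t+a-1}` (`t = n-a+1`) with
`h_i ≡ t + r_i (mod u)`, where the `r_i < u` are fixed by the high part of `f₀`. Writing
`h_i = t + u k_i + r_i`, the condition `h_i < h_{i+1}` reads `k_i ≤ k_{i+1}` at an ascent
`r_i < r_{i+1}` and `k_i < k_{i+1}` otherwise, that is `k_i + c_i < k_{i+1} + c_{i+1}` where `c_i`
counts the ascents before `i`. Hence `h ↦ {k_i + c_i}` is a bijection onto the `b`-subsets of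
`{0, …, K-1}` with `K = ⌊(a-1-r_{b-1})/u⌋ + c_{b-1} + 1`, and `⌊a/u⌋ ≤ K ≤ ⌊a/u⌋ + b`.
-/

open Finset

namespace List

theorem forall₂_append_left_iff {α : Type*} {R : α → α → Prop} (hR : ∀ x, R x x)
    (l l₁ l₂ : List α) : Forall₂ R (l ++ l₁) (l ++ l₂) ↔ Forall₂ R l₁ l₂ := by
  induction l with
  | nil => rfl
  | cons x l ih => simp [ih, hR]

theorem forall₂_ofFn_iff {α β : Type*} {R : α → β → Prop} {n : ℕ} {f : Fin n → α}
    {g : Fin n → β} : Forall₂ R (ofFn f) (ofFn g) ↔ ∀ i, R (f i) (g i) := by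
  induction n with
  | zero => simp
  | succ n ih => simp [ofFn_succ, ih, Fin.forall_fin_succ]

end List

theorem Fin.val_le_of_strictMono {n : ℕ} {y : Fin n → ℕ} (hy : StrictMono y) (i : Fin n) :
    (i : ℕ) ≤ y i := by
  obtain ⟨i, hi⟩ := i
  induction i with
  | zero => exact Nat.zero_le _
  | succ i ih => exact (ih (by omega)).trans_lt (hy (Fin.mk_lt_mk.2 (Nat.lt_succ_self i)))

namespace Finset

variable {α : Type*} [LinearOrder α]

theorem sort_union_of_forall_lt {A B : Finset α} (h : ∀ x ∈ A, ∀ y ∈ B, x < y) :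
    (A ∪ B).sort = A.sort ++ B.sort := by
  have hs : (A.sort ++ B.sort).Pairwise (· < ·) :=
    List.pairwise_append.2 ⟨A.sortedLT_sort.pairwise, B.sortedLT_sort.pairwise,
      fun x hx y hy => h x ((mem_sort _).1 hx) y ((mem_sort _).1 hy)⟩
  calc (A ∪ B).sort = (A.sort ++ B.sort).toFinset.sort := by
        rw [List.toFinset_append, sort_toFinset, sort_toFinset]
    _ = A.sort ++ B.sort := by
        exact (List.toFinset_sort (α := α) (· ≤ ·) hs.nodup).2 (hs.imp le_of_lt)

theorem ofFn_orderEmbOfFin (s : Finset α) {k : ℕ} (h : #s = k) :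
    List.ofFn (s.orderEmbOfFin h) = s.sort := by
  rw [List.ofFn_eq_map, listMap_orderEmbOfFin_finRange]

theorem sort_image_univ_of_strictMono {k : ℕ} {x : Fin k → α} (hx : StrictMono x) :
    (univ.image x).sort = List.ofFn x := by
  have hcard : #(univ.image x) = k := by
    rw [card_image_of_injective _ hx.injective, card_univ, Fintype.card_fin]
  calc (univ.image x).sort = List.ofFn ((univ.image x).orderEmbOfFin hcard) :=
        (ofFn_orderEmbOfFin _ hcard).symm
    _ = List.ofFn x := by
        rw [← orderEmbOfFin_unique hcard (fun i => mem_image_of_mem x (mem_univ i)) hx]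

open scoped Classical in
theorem card_filter_powersetCard_eq_card_filter_strictMono (s : Finset α) (k : ℕ)
    (P : List α → Prop) :
    #{S ∈ s.powersetCard k | P S.sort} =
      #{x ∈ Fintype.piFinset fun _ : Fin k => s | StrictMono x ∧ P (List.ofFn x)} := by
  refine card_bij' (fun S hS => S.orderEmbOfFin (mem_powersetCard.1 (mem_filter.1 hS).1).2)
    (fun x _ => univ.image x) ?_ ?_ ?_ ?_
  · intro S hS
    obtain ⟨hSs, hSk⟩ := mem_powersetCard.1 (mem_filter.1 hS).1
    simp only [mem_filter, Fintype.mem_piFinset, ofFn_orderEmbOfFin]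
    exact ⟨fun i => hSs (orderEmbOfFin_mem S hSk i), (S.orderEmbOfFin hSk).strictMono,
      (mem_filter.1 hS).2⟩
  · intro x hx
    obtain ⟨hxs, hxmono, hP⟩ := by simpa only [mem_filter, Fintype.mem_piFinset] using hx
    simp only [mem_filter, mem_powersetCard, sort_image_univ_of_strictMono hxmono]
    refine ⟨⟨image_subset_iff.2 fun i _ => hxs i, ?_⟩, hP⟩
    rw [card_image_of_injective _ hxmono.injective, card_univ, Fintype.card_fin]
  · intro S hS
    exact image_orderEmbOfFin_univ S _
  · intro x hx
    exact (orderEmbOfFin_unique _ (fun i => mem_image_of_mem x (mem_univ i))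
      (mem_filter.1 hx).2.1).symm

open scoped Classical in
theorem card_filter_strictMono_piFinset (s : Finset α) (k : ℕ) :
    #{x ∈ Fintype.piFinset fun _ : Fin k => s | StrictMono x} = (#s).choose k := by
  simpa using (card_filter_powersetCard_eq_card_filter_strictMono s k fun _ => True).symm

end Finset

def ascents (r : ℕ → ℕ) (n : ℕ) : ℕ := #{i ∈ range n | r i < r (i + 1)}

theorem ascents_succ (r : ℕ → ℕ) (n : ℕ) :
    ascents r (n + 1) = ascents r n + if r n < r (n + 1) then 1 else 0 := by
  unfold ascents
  rw [range_add_one, filter_insert]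
  split_ifs
  · rw [card_insert_of_notMem (by simp)]
  · rfl

theorem ascents_le (r : ℕ → ℕ) (n : ℕ) : ascents r n ≤ n :=
  (card_filter_le _ _).trans (card_range n).le

theorem Nat.mul_add_lt_mul_add_iff {u k₁ k₂ r₁ r₂ : ℕ} (h₁ : r₁ < u) (h₂ : r₂ < u) :
    u * k₁ + r₁ < u * k₂ + r₂ ↔ k₁ < k₂ + if r₁ < r₂ then 1 else 0 := by
  rcases lt_trichotomy k₁ k₂ with hk | rfl | hk
  · have := Nat.mul_le_mul_left u (Nat.succ_le_of_lt hk)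
    rw [Nat.mul_succ] at this
    split_ifs <;> omega
  · split_ifs <;> omega
  · have := Nat.mul_le_mul_left u (Nat.succ_le_of_lt hk)
    rw [Nat.mul_succ] at this
    split_ifs <;> omega

theorem Nat.mul_add_lt_iff_le_div {u k r a : ℕ} (hu : 0 < u) (hra : r < a) :
    u * k + r < a ↔ k ≤ (a - 1 - r) / u := by
  rw [Nat.le_div_iff_mul_le hu, Nat.mul_comm]
  omega

theorem Nat.eq_add_mul_div_add_of_modEq {u t x r : ℕ} (hr : r < u) (htx : t ≤ x)
    (hx : x ≡ t + r [MOD u]) : x = t + u * ((x - t) / u) + r := by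
  have hmod : (x - t) % u = r := by
    rw [← Nat.mod_eq_of_lt hr]
    exact Nat.ModEq.add_left_cancel' t (by rwa [Nat.add_sub_cancel' htx])
  have := Nat.div_add_mod (x - t) u
  omega

theorem Nat.add_mul_add_modEq (t u k r : ℕ) : t + u * k + r ≡ t + r [MOD u] := by
  rw [Nat.ModEq, Nat.add_right_comm, Nat.add_mul_mod_self_left]

theorem Nat.modEq_add_sub_mod {t y : ℕ} (u : ℕ) (h : t ≤ y) : y ≡ t + (y - t) % u [MOD u] := by
  have := (Nat.mod_modEq (y - t) u).symm.add_left t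
  rwa [Nat.add_sub_cancel' h] at this

theorem Nat.div_le_sub_one_sub_div_add_one {a u r : ℕ} (hr : r < u) (hra : r < a) :
    a / u ≤ (a - 1 - r) / u + 1 := by
  rw [← Nat.add_div_right _ ((Nat.zero_le r).trans_lt hr)]
  exact Nat.div_le_div_right (by omega)

section Residues

variable {u : ℕ} {r : ℕ → ℕ}

theorem strictMono_add_mul_add_iff (hr : ∀ i, r i < u) (t : ℕ) {l : ℕ} (k : Fin (l + 1) → ℕ) :
    StrictMono (fun i => t + u * k i + r i) ↔ StrictMono (fun i => k i + ascents r i) := by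
  simp only [Fin.strictMono_iff_lt_succ, Fin.val_castSucc, Fin.val_succ, ascents_succ]
  refine forall_congr' fun i => ?_
  rw [Nat.add_assoc, Nat.add_assoc t, Nat.add_lt_add_iff_left,
    Nat.mul_add_lt_mul_add_iff (hr _) (hr _)]
  split_ifs <;> omega

theorem strictMono_div_add_ascents (hr : ∀ i, r i < u) {t a l : ℕ} (hra : r l < a)
    {x : Fin (l + 1) → ℕ} (hxI : ∀ i, x i ∈ Ico t (t + a)) (hxmono : StrictMono x)
    (hxmod : ∀ i, x i ≡ t + r i [MOD u]) :
    StrictMono (fun i => (x i - t) / u + ascents r i) ∧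
      ∀ i, (x i - t) / u + ascents r i < (a - 1 - r l) / u + ascents r l + 1 := by
  have hu : 0 < u := (Nat.zero_le _).trans_lt (hr 0)
  have hdec : x = fun i => t + u * ((x i - t) / u) + r i :=
    funext fun i => Nat.eq_add_mul_div_add_of_modEq (hr i) (mem_Ico.1 (hxI i)).1 (hxmod i)
  have hymono : StrictMono fun i => (x i - t) / u + ascents r i :=
    (strictMono_add_mul_add_iff hr t _).1 (hdec ▸ hxmono)
  have hlast : (x (Fin.last l) - t) / u ≤ (a - 1 - r l) / u := by
    rw [← Nat.mul_add_lt_iff_le_div hu hra]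
    have := (mem_Ico.1 (hxI (Fin.last l))).2
    have := congrFun hdec (Fin.last l)
    simp only [Fin.val_last] at this
    omega
  refine ⟨hymono, fun i => ?_⟩
  have := hymono.monotone (Fin.le_last i)
  simp only [Fin.val_last] at this
  omega

theorem strictMono_add_mul_sub_ascents (hr : ∀ i, r i < u) {t a l : ℕ} (hra : r l < a)
    {y : Fin (l + 1) → ℕ} (hymono : StrictMono y)
    (hyK : ∀ i, y i < (a - 1 - r l) / u + ascents r l + 1) :
    StrictMono (fun i => t + u * (y i - ascents r i) + r i) ∧
      ∀ i, t + u * (y i - ascents r i) + r i < t + a := by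
  have hu : 0 < u := (Nat.zero_le _).trans_lt (hr 0)
  have hle : ∀ i : Fin (l + 1), ascents r i ≤ y i := fun i =>
    (ascents_le r i).trans (Fin.val_le_of_strictMono hymono i)
  have hdec : y = fun i => (y i - ascents r i) + ascents r i :=
    funext fun i => (Nat.sub_add_cancel (hle i)).symm
  have hxmono : StrictMono fun i => t + u * (y i - ascents r i) + r i :=
    (strictMono_add_mul_add_iff hr t _).2 (hdec ▸ hymono)
  have hlast : u * (y (Fin.last l) - ascents r l) + r l < a := by
    rw [Nat.mul_add_lt_iff_le_div hu hra]
    have := hyK (Fin.last l)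
    have := hle (Fin.last l)
    simp only [Fin.val_last] at this
    omega
  refine ⟨hxmono, fun i => ?_⟩
  have := hxmono.monotone (Fin.le_last i)
  simp only [Fin.val_last] at this
  omega

open scoped Classical in
theorem card_filter_strictMono_modEq (hr : ∀ i, r i < u) (t a l : ℕ) (hra : r l < a) :
    #{x ∈ Fintype.piFinset fun _ : Fin (l + 1) => Ico t (t + a) |
        StrictMono x ∧ ∀ i : Fin (l + 1), x i ≡ t + r i [MOD u]} =
      ((a - 1 - r l) / u + ascents r l + 1).choose (l + 1) := by
  have hu : 0 < u := (Nat.zero_le _).trans_lt (hr 0)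
  rw [← card_range ((a - 1 - r l) / u + ascents r l + 1), ← card_filter_strictMono_piFinset]
  refine card_bij' (fun x _ i => (x i - t) / u + ascents r i)
    (fun y _ i => t + u * (y i - ascents r i) + r i) ?_ ?_ ?_ ?_
  · intro x hx
    obtain ⟨hxI, hxmono, hxmod⟩ := by simpa only [mem_filter, Fintype.mem_piFinset] using hx
    obtain ⟨hymono, hyK⟩ := strictMono_div_add_ascents hr hra hxI hxmono hxmod
    simpa only [mem_filter, Fintype.mem_piFinset, mem_range] using ⟨hyK, hymono⟩
  · intro y hy
    obtain ⟨hyK, hymono⟩ := by simpa only [mem_filter, Fintype.mem_piFinset, mem_range] using hy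
    obtain ⟨hxmono, hxa⟩ := strictMono_add_mul_sub_ascents (t := t) hr hra hymono hyK
    simp only [mem_filter, Fintype.mem_piFinset, mem_Ico]
    exact ⟨fun i => ⟨by omega, hxa i⟩, hxmono, fun i => Nat.add_mul_add_modEq _ _ _ _⟩
  · intro x hx
    obtain ⟨hxI, -, hxmod⟩ := by simpa only [mem_filter, Fintype.mem_piFinset] using hx
    funext i
    rw [Nat.add_sub_cancel]
    exact (Nat.eq_add_mul_div_add_of_modEq (hr i) (mem_Ico.1 (hxI i)).1 (hxmod i)).symm
  · intro y hy
    obtain ⟨-, hymono⟩ := by simpa only [mem_filter, Fintype.mem_piFinset, mem_range] using hy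
    funext i
    dsimp only
    rw [Nat.add_assoc, Nat.add_sub_cancel_left, Nat.mul_add_div hu, Nat.div_eq_of_lt (hr i),
      Nat.add_zero, Nat.sub_add_cancel ((ascents_le r i).trans (Fin.val_le_of_strictMono hymono i))]

end Residues

theorem sort_eq_sort_inter_Icc_append_sort_sdiff {f : Finset ℕ} (hf : 0 ∉ f) (T : ℕ) :
    f.sort = (f ∩ Icc 1 T).sort ++ (f \ Icc 1 T).sort := by
  have hsplit : f ∩ Icc 1 T ∪ f \ Icc 1 T = f := sup_inf_sdiff f _
  conv_lhs => rw [← hsplit]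
  refine sort_union_of_forall_lt fun x hx y hy => ?_
  simp only [mem_inter, mem_sdiff, mem_Icc] at hx hy
  have : y ≠ 0 := fun h => hf (h ▸ hy.1)
  omega

open scoped Classical in
theorem card_filter_inter_Icc_eq_card_filter_sdiff (R : ℕ → ℕ → Prop) (hR : ∀ x, R x x)
    (m n T : ℕ) (f₀ : Finset ℕ) (hf₀ : f₀ ∈ Dmn m n) :
    #{f ∈ Dmn m n | f ∩ Icc 1 T = f₀ ∩ Icc 1 T ∧ List.Forall₂ R f.sort f₀.sort} =
      #{H ∈ (Icc 1 n \ Icc 1 T).powersetCard #(f₀ \ Icc 1 T) |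
        List.Forall₂ R H.sort (f₀ \ Icc 1 T).sort} := by
  have hDmn : ∀ {f}, f ∈ Dmn m n ↔ f ⊆ Icc 1 n ∧ #f = m := mem_powersetCard
  have hzero : ∀ {f}, f ∈ Dmn m n → 0 ∉ f := fun hf h => by
    simpa using (hDmn.1 hf).1 h
  have hsplit : ∀ {H}, Disjoint H (Icc 1 T) →
      (f₀ ∩ Icc 1 T ∪ H) ∩ Icc 1 T = f₀ ∩ Icc 1 T ∧ (f₀ ∩ Icc 1 T ∪ H) \ Icc 1 T = H := by
    intro H hH
    have hHI : ∀ x ∈ H, x ∉ Icc 1 T := fun _ hx => disjoint_left.1 hH hx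
    constructor <;> ext x <;> simp only [mem_inter, mem_union, mem_sdiff] <;> grind
  refine card_bij' (fun f _ => f \ Icc 1 T) (fun H _ => f₀ ∩ Icc 1 T ∪ H) ?_ ?_ ?_ ?_
  · intro f hf
    obtain ⟨hfD, hlow, hres⟩ := mem_filter.1 hf
    rw [sort_eq_sort_inter_Icc_append_sort_sdiff (hzero hfD),
      sort_eq_sort_inter_Icc_append_sort_sdiff (hzero hf₀) T, hlow,
      List.forall₂_append_left_iff hR] at hres
    have hcard := card_inter_add_card_sdiff f (Icc 1 T)
    have hcard₀ := card_inter_add_card_sdiff f₀ (Icc 1 T)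
    rw [hlow, (hDmn.1 hfD).2] at hcard
    rw [(hDmn.1 hf₀).2] at hcard₀
    simp only [mem_filter, mem_powersetCard]
    exact ⟨⟨sdiff_subset_sdiff (hDmn.1 hfD).1 le_rfl, by omega⟩, hres⟩
  · intro H hH
    obtain ⟨⟨hHsub, hHcard⟩, hres⟩ := by simpa only [mem_filter, mem_powersetCard] using hH
    have hHI : Disjoint H (Icc 1 T) := disjoint_of_subset_left hHsub sdiff_disjoint
    obtain ⟨hinter, hsdiff⟩ := hsplit hHI
    have hLH : Disjoint (f₀ ∩ Icc 1 T) H := disjoint_of_subset_left inter_subset_right hHI.symm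
    have hmem : f₀ ∩ Icc 1 T ∪ H ∈ Dmn m n := by
      refine hDmn.2 ⟨union_subset (inter_subset_left.trans (hDmn.1 hf₀).1)
        (hHsub.trans sdiff_subset), ?_⟩
      rw [card_union_of_disjoint hLH, hHcard, card_inter_add_card_sdiff, (hDmn.1 hf₀).2]
    refine mem_filter.2 ⟨hmem, hinter, ?_⟩
    rw [sort_eq_sort_inter_Icc_append_sort_sdiff (hzero hmem),
      sort_eq_sort_inter_Icc_append_sort_sdiff (hzero hf₀) T, hinter, hsdiff,
      List.forall₂_append_left_iff hR]
    exact hres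
  · intro f hf
    rw [← (mem_filter.1 hf).2.1]
    exact sup_inf_sdiff f (Icc 1 T)
  · intro H hH
    exact (hsplit (disjoint_of_subset_left (mem_powersetCard.1 (mem_filter.1 hH).1).1
      sdiff_disjoint)).2

theorem exists_residues_of_subset_Ico {t a u l : ℕ} (hu : 0 < u) {G : Finset ℕ}
    (hG : G ⊆ Ico t (t + a)) (hl : #G = l + 1) :
    ∃ r : ℕ → ℕ, (∀ i, r i < u) ∧ r l < a ∧
      ∀ i : Fin (l + 1), G.orderEmbOfFin hl i ≡ t + r i [MOD u] := by
  have hsort : ∀ i : Fin (l + 1), G.sort.getD i 0 = G.orderEmbOfFin hl i := fun i => by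
    rw [orderEmbOfFin_apply, List.getD_eq_getElem _ _ (by simpa [hl] using i.2), Fin.getElem_fin]
  have hmem : ∀ i, t ≤ G.orderEmbOfFin hl i ∧ G.orderEmbOfFin hl i < t + a := fun i =>
    mem_Ico.1 (hG (orderEmbOfFin_mem G hl i))
  refine ⟨fun i => (G.sort.getD i 0 - t) % u, fun i => Nat.mod_lt _ hu, ?_, fun i => ?_⟩
  · have := hmem (Fin.last l)
    rw [← hsort, Fin.val_last] at this
    exact (Nat.mod_le _ _).trans_lt (by omega)
  · dsimp only
    rw [hsort]
    exact Nat.modEq_add_sub_mod u (hmem i).1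

theorem card_filter_forall₂_modEq_sort {t a u l : ℕ} {r : ℕ → ℕ} (hr : ∀ i, r i < u)
    (hra : r l < a) {G : Finset ℕ} (hl : #G = l + 1)
    (hG : ∀ i : Fin (l + 1), G.orderEmbOfFin hl i ≡ t + r i [MOD u]) :
    #{H ∈ (Ico t (t + a)).powersetCard (l + 1) |
        List.Forall₂ (fun x y => x ≡ y [MOD u]) H.sort G.sort} =
      ((a - 1 - r l) / u + ascents r l + 1).choose (l + 1) := by
  classical
  calc _ = #{x ∈ Fintype.piFinset fun _ : Fin (l + 1) => Ico t (t + a) |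
          StrictMono x ∧ List.Forall₂ (fun x y => x ≡ y [MOD u]) (List.ofFn x) G.sort} := by
        convert card_filter_powersetCard_eq_card_filter_strictMono _ _
          (fun L => List.Forall₂ (fun x y => x ≡ y [MOD u]) L G.sort)
    _ = #{x ∈ Fintype.piFinset fun _ : Fin (l + 1) => Ico t (t + a) |
          StrictMono x ∧ ∀ i : Fin (l + 1), x i ≡ t + r i [MOD u]} := by
        refine congrArg card (filter_congr fun x _ => ?_)
        rw [← ofFn_orderEmbOfFin G hl, List.forall₂_ofFn_iff]
        exact and_congr_right' (forall_congr' fun i =>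
          ⟨fun h => h.trans (hG i), fun h => h.trans (hG i).symm⟩)
    _ = _ := card_filter_strictMono_modEq hr t a l hra

theorem card_equiv_class_eq_choose_general (m n a u : ℕ) (ha : a ≤ n) (hu : 0 < u)
    (f₀ : Finset ℕ) (hf₀ : f₀ ∈ Dmn m n) (hnot : ¬ f₀ ⊆ Finset.Icc 1 (n - a)) :
    ∃ b s : ℕ, 0 < b ∧ b ≤ m ∧ s ≤ b ∧
      (@Finset.filter _ (fun f => EqvRel n a u f f₀) (Classical.decPred _) (Dmn m n)).card
        = Nat.choose (a / u + b - s) b := by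
  classical
  have hIco : Icc 1 n \ Icc 1 (n - a) = Ico (n - a + 1) (n - a + 1 + a) := by
    ext x
    simp only [mem_sdiff, mem_Icc, mem_Ico]
    omega
  obtain ⟨l, hl⟩ : ∃ l, #(f₀ \ Icc 1 (n - a)) = l + 1 :=
    Nat.exists_eq_succ_of_ne_zero (by simpa [sdiff_eq_empty_iff_subset] using hnot)
  have hlm : l + 1 ≤ m := hl ▸ (mem_powersetCard.1 hf₀).2 ▸ card_le_card sdiff_subset
  obtain ⟨r, hr, hra, hG⟩ := exists_residues_of_subset_Ico hu
    (hIco ▸ sdiff_subset_sdiff (mem_powersetCard.1 hf₀).1 le_rfl) hl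
  have hcount : #{f ∈ Dmn m n | EqvRel n a u f f₀} =
      ((a - 1 - r l) / u + ascents r l + 1).choose (l + 1) := by
    rw [← card_filter_forall₂_modEq_sort hr hra hl hG, ← hl, ← hIco]
    convert card_filter_inter_Icc_eq_card_filter_sdiff (fun x y => x ≡ y [MOD u])
      Nat.ModEq.refl m n (n - a) f₀ hf₀
    exact Iff.rfl
  have hK₁ : a / u ≤ (a - 1 - r l) / u + ascents r l + 1 :=
    (Nat.div_le_sub_one_sub_div_add_one (hr l) hra).trans (Nat.add_le_add_right le_self_add 1)
  have hK₂ : (a - 1 - r l) / u + ascents r l + 1 ≤ a / u + (l + 1) :=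
    Nat.add_le_add_right (Nat.add_le_add (Nat.div_le_div_right (by omega)) (ascents_le r l)) 1
  refine ⟨l + 1, a / u + (l + 1) - ((a - 1 - r l) / u + ascents r l + 1), l.succ_pos, hlm,
    by omega, ?_⟩
  rw [hcount, Nat.sub_sub_self hK₂]

/-- Every equivalence class `δ` of `≡ᵘₐ` on `D_{m,n}` containing a subset not contained in
`{1,...,n-a}` has cardinality `C(⌊a/u⌋ - s + b, b)` for some `0 < b ≤ m`, `0 ≤ s ≤ b`. -/
theorem card_equiv_class_eq_choose (m n a u : ℕ) (hm : m ≤ n) (ha : a ≤ n) (hu : 0 < u)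
    (f₀ : Finset ℕ) (hf₀ : f₀ ∈ Dmn m n) (hnot : ¬ f₀ ⊆ Finset.Icc 1 (n - a)) :
    ∃ b s : ℕ, 0 < b ∧ b ≤ m ∧ s ≤ b ∧
      (@Finset.filter _ (fun f => EqvRel n a u f f₀) (Classical.decPred _) (Dmn m n)).card
        = Nat.choose (a / u + b - s) b :=
  card_equiv_class_eq_choose_general m n a u ha hu f₀ hf₀ hnot
end

section
/- Let 0 ≤ n₁ ≤ ... ≤ n_L ≤ n and for j ∈ {1,2} let f_{q,j} be n_q-element subsets of {1,...,n}. Set η_{q,j} = γ_{f_{q,j}}^{-1}···γ_{f_{1,j}}^{-1} ∈ S_n and g_{q,j} = β^{n_q}(η_{q,j}) = η_{q,j}^{-1}({1,...,n_q}). Then for each 2 ≤ q ≤ L, the containment g_{q-1,j} ⊆ g_{q,j} holds if and only if {1,...,n_{q-1}} ⊆ f_{q,j}; and in that case η_{q-1,j} maps g_{q,j} \ g_{q-1,j} bijectively onto f_{q,j} \ {1,...,n_{q-1}}. -/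
open Equiv Finset

/-- The initial segment `{i : Fin n | i < m}` (corresponding to `{1,...,m}`). -/
def Ilt (n m : ℕ) : Finset (Fin n) := Finset.univ.filter fun i => (i : ℕ) < m

/-- `γ` assigns to each subset `f` of `Fin n` its standard coset representative: the unique
permutation mapping the initial segment of length `f.card` onto `f` order-preservingly and
the complement order-preservingly. -/
def IsStdRep {n : ℕ} (γ : Finset (Fin n) → Equiv.Perm (Fin n)) : Prop :=
  ∀ f : Finset (Fin n),
    (∀ i : Fin n, (i : ℕ) < f.card ↔ γ f i ∈ f) ∧
    StrictMonoOn (γ f) {i : Fin n | (i : ℕ) < f.card} ∧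
    StrictMonoOn (γ f) {i : Fin n | f.card ≤ (i : ℕ)}

/-- `β^m(σ) = σ⁻¹({1,...,m})`. -/
def betaF {n : ℕ} (m : ℕ) (σ : Equiv.Perm (Fin n)) : Finset (Fin n) :=
  (Ilt n m).image ⇑σ⁻¹

/-- `tr^m(σ) = σ · γ_{β^m(σ)}`. -/
def trF {n : ℕ} (γ : Finset (Fin n) → Equiv.Perm (Fin n)) (m : ℕ)
    (σ : Equiv.Perm (Fin n)) : Equiv.Perm (Fin n) :=
  σ * γ (betaF m σ)

theorem Ilt_card {n m : ℕ} (h : m ≤ n) : (Ilt n m).card = m := by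
  have : (Ilt n m).image (Fin.val) = Finset.range m := by
    ext x
    simp only [Ilt, Finset.mem_image, Finset.mem_filter, Finset.mem_univ, true_and,
      Finset.mem_range]
    constructor
    · rintro ⟨i, hi, rfl⟩; exact hi
    · intro hx; exact ⟨⟨x, lt_of_lt_of_le hx h⟩, hx, rfl⟩
  calc (Ilt n m).card = ((Ilt n m).image Fin.val).card :=
        (Finset.card_image_of_injective _ Fin.val_injective).symm
    _ = m := by rw [this, Finset.card_range]

/-- Part 1 of the chain lemma: with `η_q = γ_{f_q}⁻¹ ⋯ γ_{f_1}⁻¹` and `g_q = β^{n_q}(η_q)`,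
for `2 ≤ q ≤ L` one has `g_{q-1} ⊆ g_q ↔ {1,...,n_{q-1}} ⊆ f_q`, and in that case
`η_{q-1}` maps `g_q \ g_{q-1}` bijectively onto `f_q \ {1,...,n_{q-1}}`. -/
theorem chain_lemma_part_one (n L : ℕ) (hL : 1 ≤ L)
    (γ : Finset (Fin n) → Equiv.Perm (Fin n)) (hγ : IsStdRep γ)
    (nseq : ℕ → ℕ)
    (hmono : ∀ q, 1 ≤ q → q < L → nseq q ≤ nseq (q + 1))
    (hlen : ∀ q, 1 ≤ q → q ≤ L → nseq q ≤ n)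
    (f : ℕ → Finset (Fin n)) (hcard : ∀ q, 1 ≤ q → q ≤ L → (f q).card = nseq q)
    (η : ℕ → Equiv.Perm (Fin n)) (hη0 : η 0 = 1)
    (hηrec : ∀ q, 1 ≤ q → q ≤ L → η q = (γ (f q))⁻¹ * η (q - 1))
    (g : ℕ → Finset (Fin n)) (hg : ∀ q, 1 ≤ q → q ≤ L → g q = betaF (nseq q) (η q))
    (q : ℕ) (hq2 : 2 ≤ q) (hqL : q ≤ L) :
    (g (q - 1) ⊆ g q ↔ Ilt n (nseq (q - 1)) ⊆ f q) ∧
    (g (q - 1) ⊆ g q →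
      (g q \ g (q - 1)).image ⇑(η (q - 1)) = f q \ Ilt n (nseq (q - 1))) := by
  have himg : (Ilt n (f q).card).image ⇑(γ (f q)) = f q := by
    apply Finset.eq_of_subset_of_card_le
    · intro x hx
      simp only [Finset.mem_image] at hx
      obtain ⟨i, hi, rfl⟩ := hx
      simp only [Ilt, Finset.mem_filter, Finset.mem_univ, true_and] at hi
      exact ((hγ (f q)).1 i).1 hi
    · rw [Finset.card_image_of_injective _ (γ (f q)).injective]
      apply le_of_eq
      rw [Ilt_card]
      exact (Finset.card_le_univ (f q)).trans (by simp)
  have hgq : g q = (f q).image ⇑(η (q - 1))⁻¹ := by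
    rw [hg q (by omega) hqL, hηrec q (by omega) hqL, betaF, mul_inv_rev, inv_inv,
      Equiv.Perm.coe_mul, ← Finset.image_image, ← hcard q (by omega) hqL, himg]
  have hgp : g (q - 1) = (Ilt n (nseq (q - 1))).image ⇑(η (q - 1))⁻¹ :=
    hg (q - 1) (by omega) (by omega)
  constructor
  · rw [hgq, hgp, Finset.image_subset_image_iff (η (q - 1))⁻¹.injective]
  · intro _
    rw [hgq, hgp, ← Finset.image_sdiff _ _ (η (q - 1))⁻¹.injective,
      Finset.image_image]
    simp [Function.comp_def]
end

section
/- Let 0 ≤ n₁ ≤ ... ≤ n_L ≤ n. For j ∈ {1,2}, suppose given nested chains g_{1,j} ⊆ g_{2,j} ⊆ ... ⊆ g_{L,j} of subsets of {1,...,n} with |g_{q,j}| = n_q, arising as g_{q,j} = η_{q,j}^{-1}({1,...,n_q}) for products of standard coset representatives η_{q,j} as in the paper. Then the following are equivalent: (A) tr^{n_L}(η_{L,1}) = tr^{n_L}(η_{L,2}); (B) the unique order-preserving bijection τ' : g_{L,1} → g_{L,2} satisfies τ'(g_{q,1}) = g_{q,2} for all 1 ≤ q ≤ L; (C) tr^{n_q}(η_{q,1})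 = tr^{n_q}(η_{q,2}) for all 1 ≤ q ≤ L. -/
/-
Write `tr_p^j = η_p^j γ(g_p^j)` and let `π_p = γ(g_p^1) γ(g_p^0)⁻¹`, which maps `g_p^0` onto
`g_p^1` and its complement onto the complement of `g_p^1`, increasingly on both. Then
`tr_p^0 = tr_p^1` iff `η_p^0 = η_p^1 π_p`.

Since `γ(f_q)` fixes the initial segment `{1,…,n_{q-1}} ⊆ f_q`, `η_p` agrees with `η_q` on `g_q`,
so for `q ≤ p`, `x ∈ g_q` iff `η_p x` lies in the initial segment of length `n_q`. Moreover `η_p`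
is increasing on each class of points lying in the same members of the chain `g_1 ⊆ ⋯ ⊆ g_p`.
A permutation that is increasing on such classes is determined by their images, so
`η_p^0 = η_p^1 π_p` iff `π_p (g_q^0) = g_q^1` for all `q ≤ p`. For `p = L` this is (B), and it
implies the same condition at every level `q ≤ L` because `π_L` and `π_q` are both increasing
bijections `g_q^0 → g_q^1`, hence agree there.
-/

open Equiv Finset

theorem Equiv.Perm.image_eq_of_mem_iff {α : Type*} {σ : Perm α} {s t : Set α}
    (h : ∀ x, σ x ∈ t ↔ x ∈ s) : σ '' s = t := by
  rw [Equiv.image_eq_preimage_symm]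
  ext y
  rw [Set.mem_preimage, ← h, Equiv.apply_symm_apply]

section WellOrder

variable {α : Type*} [LinearOrder α] [WellFoundedLT α]

theorem OrderIso.coe_apply_eq_of_strictMonoOn {β : Type*} [Preorder β] {s : Set α} {t : Set β}
    (e : s ≃o t) {f : α → β} (hf : StrictMonoOn f s) (hst : f '' s = t) (x : s) :
    (e x : β) = f x := by
  rw [Subsingleton.elim e ((hf.orderIso f s).trans (OrderIso.setCongr _ _ hst))]
  rfl

theorem Equiv.Perm.eqOn_of_strictMonoOn {σ τ : Perm α} {s t : Set α}
    (hσ : StrictMonoOn σ s) (hτ : StrictMonoOn τ s)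
    (hσst : ∀ x, σ x ∈ t ↔ x ∈ s) (hτst : ∀ x, τ x ∈ t ↔ x ∈ s) : Set.EqOn σ τ s := by
  intro x hx
  let e := (hσ.orderIso σ s).trans (OrderIso.setCongr _ _ (σ.image_eq_of_mem_iff hσst))
  rw [← e.coe_apply_eq_of_strictMonoOn hσ (σ.image_eq_of_mem_iff hσst) ⟨x, hx⟩,
    e.coe_apply_eq_of_strictMonoOn hτ (τ.image_eq_of_mem_iff hτst) ⟨x, hx⟩]

theorem Equiv.Perm.eq_of_mem_iff_of_strictMono_on_classes {ι : Type*} (B : ι → Set α)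
    {σ τ : Perm α} (hB : ∀ i x, σ x ∈ B i ↔ τ x ∈ B i)
    (hσ : ∀ x y, (∀ i, σ x ∈ B i ↔ σ y ∈ B i) → x < y → σ x < σ y)
    (hτ : ∀ x y, (∀ i, τ x ∈ B i ↔ τ y ∈ B i) → x < y → τ x < τ y) : σ = τ := by
  ext x
  have hclass : ∀ y z, (∀ i, σ y ∈ B i ↔ σ z ∈ B i) ↔ ∀ i, τ y ∈ B i ↔ τ z ∈ B i :=
    fun y z => by simp only [hB]
  refine Perm.eqOn_of_strictMonoOn (s := {y | ∀ i, σ y ∈ B i ↔ σ x ∈ B i})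
    (t := {z | ∀ i, z ∈ B i ↔ σ x ∈ B i}) ?_ ?_ (fun _ => Iff.rfl) ?_ fun _ => Iff.rfl
  · intro y hy z hz
    exact hσ y z fun i => (hy i).trans (hz i).symm
  · intro y hy z hz
    exact hτ y z ((hclass y z).1 fun i => (hy i).trans (hz i).symm)
  · intro y
    simp only [Set.mem_ofPred_eq, hB]

end WellOrder

section

variable {n : ℕ}

@[simp]
theorem mem_Ilt {m : ℕ} {i : Fin n} : i ∈ Ilt n m ↔ (i : ℕ) < m := by
  simp [Ilt]

theorem mem_betaF {m : ℕ} {σ : Perm (Fin n)} {x : Fin n} : x ∈ betaF m σ ↔ (σ x : ℕ) < m := by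
  simp [betaF, Equiv.symm_apply_eq]

theorem card_betaF (m : ℕ) (σ : Perm (Fin n)) : (betaF m σ).card = (Ilt n m).card :=
  card_image_of_injective _ σ⁻¹.injective

end

namespace IsStdRep

variable {n : ℕ} {γ : Finset (Fin n) → Perm (Fin n)}

theorem inv_apply_lt_card_iff (hγ : IsStdRep γ) (s : Finset (Fin n)) (y : Fin n) :
    ((γ s)⁻¹ y : ℕ) < s.card ↔ y ∈ s := by
  simpa using (hγ s).1 ((γ s)⁻¹ y)

theorem apply_lt_apply_iff (hγ : IsStdRep γ) (s : Finset (Fin n)) {i j : Fin n}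
    (hij : (i : ℕ) < s.card ↔ (j : ℕ) < s.card) : γ s i < γ s j ↔ i < j := by
  by_cases hi : (i : ℕ) < s.card
  · exact (hγ s).2.1.lt_iff_lt hi (hij.1 hi)
  · have hj : ¬(j : ℕ) < s.card := fun hj => hi (hij.2 hj)
    exact (hγ s).2.2.lt_iff_lt (not_lt.1 hi) (not_lt.1 hj)

theorem inv_apply_lt_inv_apply_iff (hγ : IsStdRep γ) (s : Finset (Fin n)) {x y : Fin n}
    (hxy : x ∈ s ↔ y ∈ s) : (γ s)⁻¹ x < (γ s)⁻¹ y ↔ x < y := by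
  rw [← hγ.apply_lt_apply_iff s (by rw [inv_apply_lt_card_iff hγ, inv_apply_lt_card_iff hγ, hxy])]
  simp

theorem apply_eq_self (hγ : IsStdRep γ) {s : Finset (Fin n)} {k : ℕ} (hs : Ilt n k ⊆ s)
    {i : Fin n} (hi : (i : ℕ) < k) : γ s i = i := by
  have : NeZero n := ⟨i.pos.ne'⟩
  have hmem : ∀ a ≤ i, a ∈ s := fun a ha => hs (mem_Ilt.2 (lt_of_le_of_lt ha hi))
  set j := (γ s)⁻¹ i with hj
  have hγj : γ s j = i := by simp [hj]
  have hjs : (j : ℕ) < s.card := (inv_apply_lt_card_iff hγ s i).2 (hmem i le_rfl)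
  have hji : j ≤ i := hγj ▸ StrictMonoOn.Iic_id_le (n := j)
    (fun a ha b hb hab => (hγ.apply_lt_apply_iff s (iff_of_true
      (lt_of_le_of_lt (Fin.le_iff_val_le_val.1 ha) hjs)
      (lt_of_le_of_lt (Fin.le_iff_val_le_val.1 hb) hjs))).2 hab) j le_rfl
  have hij : i ≤ j := StrictMonoOn.Iic_id_le (n := i)
    (fun a ha b hb hab => (hγ.inv_apply_lt_inv_apply_iff s
      (iff_of_true (hmem a ha) (hmem b hb))).2 hab) i le_rfl
  rwa [le_antisymm hji hij] at hγj

theorem mul_inv_apply_mem_iff (hγ : IsStdRep γ) {s t : Finset (Fin n)} (hst : s.card = t.card)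
    (x : Fin n) : (γ t * (γ s)⁻¹) x ∈ t ↔ x ∈ s := by
  rw [Perm.mul_apply, ← (hγ t).1, ← hst, inv_apply_lt_card_iff hγ]

theorem mul_inv_apply_lt_apply_iff (hγ : IsStdRep γ) {s t : Finset (Fin n)} (hst : s.card = t.card)
    {x y : Fin n} (hxy : x ∈ s ↔ y ∈ s) :
    (γ t * (γ s)⁻¹) x < (γ t * (γ s)⁻¹) y ↔ x < y := by
  rw [Perm.mul_apply, Perm.mul_apply, hγ.apply_lt_apply_iff t
    (by rw [← hst, inv_apply_lt_card_iff hγ, inv_apply_lt_card_iff hγ, hxy]),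
    hγ.inv_apply_lt_inv_apply_iff s hxy]

theorem strictMonoOn_mul_inv (hγ : IsStdRep γ) {s t : Finset (Fin n)} (hst : s.card = t.card) :
    StrictMonoOn (γ t * (γ s)⁻¹) (s : Set (Fin n)) := fun _ hx _ hy =>
  (hγ.mul_inv_apply_lt_apply_iff hst (iff_of_true hx hy)).2

end IsStdRep

structure IsCosetRepChain {n : ℕ} (γ : Finset (Fin n) → Perm (Fin n)) (L : ℕ) (m : ℕ → ℕ)
    (f : ℕ → Finset (Fin n)) (η : ℕ → Perm (Fin n)) (g : ℕ → Finset (Fin n)) : Prop where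
  isStdRep : IsStdRep γ
  card_f : ∀ q, 1 ≤ q → q ≤ L → (f q).card = m q
  eta_zero : η 0 = 1
  eta_eq : ∀ q, 1 ≤ q → q ≤ L → η q = (γ (f q))⁻¹ * η (q - 1)
  g_eq : ∀ q, 1 ≤ q → q ≤ L → g q = betaF (m q) (η q)
  Ilt_subset_f : ∀ q, 2 ≤ q → q ≤ L → Ilt n (m (q - 1)) ⊆ f q

namespace IsCosetRepChain

variable {n L : ℕ} {γ : Finset (Fin n) → Perm (Fin n)} {m : ℕ → ℕ} {f g : ℕ → Finset (Fin n)}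
  {η : ℕ → Perm (Fin n)} {q p : ℕ} {x y : Fin n}

theorem mem_g_iff (hC : IsCosetRepChain γ L m f η g) (hq : 1 ≤ q) (hqL : q ≤ L) :
    x ∈ g q ↔ (η q x : ℕ) < m q := by
  rw [hC.g_eq q hq hqL, mem_betaF]

theorem mem_g_iff_mem_f (hC : IsCosetRepChain γ L m f η g) (hq : 1 ≤ q) (hqL : q ≤ L) :
    x ∈ g q ↔ η (q - 1) x ∈ f q := by
  rw [hC.mem_g_iff hq hqL, hC.eta_eq q hq hqL, Perm.mul_apply, ← hC.card_f q hq hqL,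
    hC.isStdRep.inv_apply_lt_card_iff]

theorem g_subset_succ (hC : IsCosetRepChain γ L m f η g) (hq : 1 ≤ q) (hqL : q < L) :
    g q ⊆ g (q + 1) := fun x hx => by
  rw [hC.mem_g_iff_mem_f (q := q + 1) (by omega) hqL, Nat.add_sub_cancel]
  exact hC.Ilt_subset_f (q + 1) (by omega) hqL (by simpa using (hC.mem_g_iff hq hqL.le).1 hx)

theorem eta_succ_apply (hC : IsCosetRepChain γ L m f η g) (hq : 1 ≤ q) (hqL : q < L)
    (hx : x ∈ g q) : η (q + 1) x = η q x := by
  have hfix := hC.isStdRep.apply_eq_self (by simpa using hC.Ilt_subset_f (q + 1) (by omega) hqL)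
    ((hC.mem_g_iff hq hqL.le).1 hx)
  rw [hC.eta_eq (q + 1) (by omega) hqL, Nat.add_sub_cancel, Perm.mul_apply, Perm.inv_eq_iff_eq,
    hfix]

theorem g_mono (hC : IsCosetRepChain γ L m f η g) (hq : 1 ≤ q) (hqp : q ≤ p) (hpL : p ≤ L) :
    g q ⊆ g p := by
  induction p, hqp using Nat.le_induction with
  | base => exact subset_rfl
  | succ p hqp ih => exact (ih (by omega)).trans (hC.g_subset_succ (by omega) (by omega))

theorem eta_apply_of_mem (hC : IsCosetRepChain γ L m f η g) (hq : 1 ≤ q) (hqp : q ≤ p)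
    (hpL : p ≤ L) (hx : x ∈ g q) : η p x = η q x := by
  induction p, hqp using Nat.le_induction with
  | base => rfl
  | succ p hqp ih =>
    rw [hC.eta_succ_apply (by omega) (by omega) (hC.g_mono hq hqp (by omega) hx), ih (by omega)]

theorem mem_g_iff_lt (hC : IsCosetRepChain γ L m f η g) (hq : 1 ≤ q) (hqp : q ≤ p)
    (hpL : p ≤ L) : x ∈ g q ↔ (η p x : ℕ) < m q := by
  refine ⟨fun hx => ?_, fun hx => ?_⟩
  · rw [hC.eta_apply_of_mem hq hqp hpL hx]
    exact (hC.mem_g_iff hq (by omega)).1 hx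
  · have hx' : (η q)⁻¹ (η p x) ∈ g q := by
      rwa [hC.mem_g_iff hq (by omega), Perm.coe_inv, Equiv.apply_symm_apply]
    have hpx : η p ((η q)⁻¹ (η p x)) = η p x := by
      rw [hC.eta_apply_of_mem hq hqp hpL hx', Perm.coe_inv, Equiv.apply_symm_apply]
    rwa [← (η p).injective hpx]

theorem eta_lt_eta (hC : IsCosetRepChain γ L m f η g) (hpL : p ≤ L)
    (hxy : ∀ q, 1 ≤ q → q ≤ p → (x ∈ g q ↔ y ∈ g q)) (h : x < y) : η p x < η p y := by
  induction p with
  | zero => simpa [hC.eta_zero] using h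
  | succ p ih =>
    have hf := (hxy (p + 1) (by omega) le_rfl)
    rw [hC.mem_g_iff_mem_f (by omega) hpL, hC.mem_g_iff_mem_f (by omega) hpL,
      Nat.add_sub_cancel] at hf
    rw [hC.eta_eq (p + 1) (by omega) hpL, Nat.add_sub_cancel, Perm.mul_apply, Perm.mul_apply,
      hC.isStdRep.inv_apply_lt_inv_apply_iff _ hf]
    exact ih (by omega) fun q hq hqp => hxy q hq (by omega)

theorem card_g (hC : IsCosetRepChain γ L m f η g) (hq : 1 ≤ q) (hqL : q ≤ L) :
    (g q).card = (Ilt n (m q)).card := by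
  rw [hC.g_eq q hq hqL, card_betaF]

theorem trF_eq (hC : IsCosetRepChain γ L m f η g) (hq : 1 ≤ q) (hqL : q ≤ L) :
    trF γ (m q) (η q) = η q * γ (g q) := by
  rw [trF, hC.g_eq q hq hqL]

end IsCosetRepChain

section TwoChains

variable {n L : ℕ} {γ : Finset (Fin n) → Perm (Fin n)} {m : ℕ → ℕ}
  {f₀ f₁ g₀ g₁ : ℕ → Finset (Fin n)} {η₀ η₁ : ℕ → Perm (Fin n)} {p : ℕ}

theorem IsCosetRepChain.card_g_eq (hC₀ : IsCosetRepChain γ L m f₀ η₀ g₀)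
    (hC₁ : IsCosetRepChain γ L m f₁ η₁ g₁) (hp : 1 ≤ p) (hpL : p ≤ L) :
    (g₀ p).card = (g₁ p).card := by
  rw [hC₀.card_g hp hpL, hC₁.card_g hp hpL]

theorem IsCosetRepChain.eta_eq_mul_iff (hC₀ : IsCosetRepChain γ L m f₀ η₀ g₀)
    (hC₁ : IsCosetRepChain γ L m f₁ η₁ g₁) (hp : 1 ≤ p) (hpL : p ≤ L) {π : Perm (Fin n)}
    (hπ : ∀ x y, (x ∈ g₀ p ↔ y ∈ g₀ p) → x < y → π x < π y)
    (hπg : ∀ x, π x ∈ g₁ p ↔ x ∈ g₀ p) :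
    η₀ p = η₁ p * π ↔ ∀ q, 1 ≤ q → q ≤ p → ∀ x, x ∈ g₀ q ↔ π x ∈ g₁ q := by
  have hlt₀ {q : ℕ} {x : Fin n} (hq : 1 ≤ q) (hqp : q ≤ p) : x ∈ g₀ q ↔ (η₀ p x : ℕ) < m q :=
    hC₀.mem_g_iff_lt hq hqp hpL
  have hlt₁ {q : ℕ} {x : Fin n} (hq : 1 ≤ q) (hqp : q ≤ p) : x ∈ g₁ q ↔ (η₁ p x : ℕ) < m q :=
    hC₁.mem_g_iff_lt hq hqp hpL
  refine ⟨fun h q hq hqp x => by rw [hlt₀ hq hqp, hlt₁ hq hqp, h, Perm.mul_apply], fun h => ?_⟩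
  refine Perm.eq_of_mem_iff_of_strictMono_on_classes
    (fun i : Set.Icc 1 p => {y : Fin n | (y : ℕ) < m i}) ?_ ?_ ?_
  · rintro ⟨q, hq, hqp⟩ x
    exact (hlt₀ hq hqp).symm.trans ((h q hq hqp x).trans (hlt₁ hq hqp))
  · intro x y hxy
    refine hC₀.eta_lt_eta hpL fun q hq hqp => ?_
    rw [hlt₀ hq hqp, hlt₀ hq hqp]
    exact hxy ⟨q, hq, hqp⟩
  · intro x y hxy hlt
    have hπxy : ∀ q, 1 ≤ q → q ≤ p → (π x ∈ g₁ q ↔ π y ∈ g₁ q) := fun q hq hqp => by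
      rw [hlt₁ hq hqp, hlt₁ hq hqp]
      exact hxy ⟨q, hq, hqp⟩
    exact hC₁.eta_lt_eta hpL hπxy
      (hπ x y (by rw [← hπg, ← hπg]; exact hπxy p hp le_rfl) hlt)

theorem IsCosetRepChain.trF_eq_trF_iff (hC₀ : IsCosetRepChain γ L m f₀ η₀ g₀)
    (hC₁ : IsCosetRepChain γ L m f₁ η₁ g₁) (hp : 1 ≤ p) (hpL : p ≤ L) :
    trF γ (m p) (η₀ p) = trF γ (m p) (η₁ p) ↔
      ∀ q, 1 ≤ q → q ≤ p → ∀ x, x ∈ g₀ q ↔ (γ (g₁ p) * (γ (g₀ p))⁻¹) x ∈ g₁ q := by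
  have hcard := hC₀.card_g_eq hC₁ hp hpL
  rw [hC₀.trF_eq hp hpL, hC₁.trF_eq hp hpL, ← eq_mul_inv_iff_mul_eq, mul_assoc]
  exact hC₀.eta_eq_mul_iff hC₁ hp hpL
    (fun x y hxy => (hC₀.isStdRep.mul_inv_apply_lt_apply_iff hcard hxy).2)
    (hC₀.isStdRep.mul_inv_apply_mem_iff hcard)

theorem IsCosetRepChain.mem_iff_mul_inv_apply_mem_of_notMem (hC₀ : IsCosetRepChain γ L m f₀ η₀ g₀)
    (hC₁ : IsCosetRepChain γ L m f₁ η₁ g₁) (hp : 1 ≤ p) (hpL : p ≤ L) {x : Fin n}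
    (hx : x ∉ g₀ p) {q : ℕ} (hq : 1 ≤ q) (hqp : q ≤ p) :
    x ∈ g₀ q ↔ (γ (g₁ p) * (γ (g₀ p))⁻¹) x ∈ g₁ q := by
  have hcard := hC₀.card_g_eq hC₁ hp hpL
  refine iff_of_false (fun h => hx (hC₀.g_mono hq hqp hpL h)) fun h => hx ?_
  exact (hC₀.isStdRep.mul_inv_apply_mem_iff hcard x).1 (hC₁.g_mono hq hqp hpL h)

theorem IsCosetRepChain.forall_orderIso_mem_iff (hC₀ : IsCosetRepChain γ L m f₀ η₀ g₀)
    (hC₁ : IsCosetRepChain γ L m f₁ η₁ g₁) (hp : 1 ≤ p) (hpL : p ≤ L) :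
    (∀ (τ : {x // x ∈ g₀ p} ≃o {x // x ∈ g₁ p}) (q : ℕ), 1 ≤ q → q ≤ p →
        ∀ x : {x // x ∈ g₀ p}, ((x : Fin n) ∈ g₀ q ↔ ((τ x : {x // x ∈ g₁ p}) : Fin n) ∈ g₁ q)) ↔
      ∀ q, 1 ≤ q → q ≤ p → ∀ x, x ∈ g₀ q ↔ (γ (g₁ p) * (γ (g₀ p))⁻¹) x ∈ g₁ q := by
  have hcard := hC₀.card_g_eq hC₁ hp hpL
  have hmono := hC₀.isStdRep.strictMonoOn_mul_inv hcard
  have himage := Perm.image_eq_of_mem_iff (s := (g₀ p : Set (Fin n))) (t := g₁ p)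
    (hC₀.isStdRep.mul_inv_apply_mem_iff hcard)
  have hτ (τ : {x // x ∈ g₀ p} ≃o {x // x ∈ g₁ p}) (x : {x // x ∈ g₀ p}) :
      (τ x : Fin n) = (γ (g₁ p) * (γ (g₀ p))⁻¹) x :=
    τ.coe_apply_eq_of_strictMonoOn hmono himage x
  refine ⟨fun h q hq hqp x => ?_, fun h τ q hq hqp x => hτ τ x ▸ h q hq hqp x⟩
  by_cases hx : x ∈ g₀ p
  · let τ : {x // x ∈ g₀ p} ≃o {x // x ∈ g₁ p} :=
      (hmono.orderIso _ _).trans (OrderIso.setCongr _ _ himage)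
    exact hτ τ ⟨x, hx⟩ ▸ h τ q hq hqp ⟨x, hx⟩
  · exact hC₀.mem_iff_mul_inv_apply_mem_of_notMem hC₁ hp hpL hx hq hqp

theorem IsCosetRepChain.forall_mem_iff_of_le (hC₀ : IsCosetRepChain γ L m f₀ η₀ g₀)
    (hC₁ : IsCosetRepChain γ L m f₁ η₁ g₁) {q : ℕ} (hq : 1 ≤ q) (hqp : q ≤ p) (hpL : p ≤ L)
    (h : ∀ r, 1 ≤ r → r ≤ p → ∀ x, x ∈ g₀ r ↔ (γ (g₁ p) * (γ (g₀ p))⁻¹) x ∈ g₁ r) :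
    ∀ r, 1 ≤ r → r ≤ q → ∀ x, x ∈ g₀ r ↔ (γ (g₁ q) * (γ (g₀ q))⁻¹) x ∈ g₁ r := by
  have heq : Set.EqOn ⇑(γ (g₁ p) * (γ (g₀ p))⁻¹) ⇑(γ (g₁ q) * (γ (g₀ q))⁻¹) (g₀ q) :=
    Perm.eqOn_of_strictMonoOn (t := g₁ q)
      ((hC₀.isStdRep.strictMonoOn_mul_inv (hC₀.card_g_eq hC₁ (by omega) hpL)).mono
        (by exact_mod_cast hC₀.g_mono hq hqp hpL))
      (hC₀.isStdRep.strictMonoOn_mul_inv (hC₀.card_g_eq hC₁ hq (by omega)))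
      (fun x => (h q hq hqp x).symm)
      (hC₀.isStdRep.mul_inv_apply_mem_iff (hC₀.card_g_eq hC₁ hq (by omega)))
  intro r hr hrq x
  by_cases hx : x ∈ g₀ q
  · exact heq hx ▸ h r hr (hrq.trans hqp) x
  · exact hC₀.mem_iff_mul_inv_apply_mem_of_notMem hC₁ hq (by omega) hx hr hrq

end TwoChains

theorem chain_lemma_part_two_general (n L : ℕ) (hL : 1 ≤ L)
    (γ : Finset (Fin n) → Equiv.Perm (Fin n)) (hγ : IsStdRep γ)
    (nseq : ℕ → ℕ)
    (f : Fin 2 → ℕ → Finset (Fin n))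
    (hcard : ∀ j q, 1 ≤ q → q ≤ L → (f j q).card = nseq q)
    (η : Fin 2 → ℕ → Equiv.Perm (Fin n)) (hη0 : ∀ j, η j 0 = 1)
    (hηrec : ∀ j q, 1 ≤ q → q ≤ L → η j q = (γ (f j q))⁻¹ * η j (q - 1))
    (g : Fin 2 → ℕ → Finset (Fin n))
    (hg : ∀ j q, 1 ≤ q → q ≤ L → g j q = betaF (nseq q) (η j q))
    (hcontain : ∀ j q, 2 ≤ q → q ≤ L → Ilt n (nseq (q - 1)) ⊆ f j q) :
    ((trF γ (nseq L) (η 0 L) = trF γ (nseq L) (η 1 L)) ↔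
      (∀ (τ : {x // x ∈ g 0 L} ≃o {x // x ∈ g 1 L}) (q : ℕ), 1 ≤ q → q ≤ L →
        ∀ x : {x // x ∈ g 0 L}, ((x : Fin n) ∈ g 0 q ↔ ((τ x : {x // x ∈ g 1 L}) : Fin n) ∈ g 1 q))) ∧
    ((trF γ (nseq L) (η 0 L) = trF γ (nseq L) (η 1 L)) ↔
      (∀ q, 1 ≤ q → q ≤ L → trF γ (nseq q) (η 0 q) = trF γ (nseq q) (η 1 q))) := by
  have hC (j : Fin 2) : IsCosetRepChain γ L nseq (f j) (η j) (g j) :=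
    ⟨hγ, hcard j, hη0 j, hηrec j, hg j, hcontain j⟩
  rw [(hC 0).trF_eq_trF_iff (hC 1) hL le_rfl, (hC 0).forall_orderIso_mem_iff (hC 1) hL le_rfl]
  refine ⟨Iff.rfl, fun h q hq hqL => ?_, fun h => ?_⟩
  · exact ((hC 0).trF_eq_trF_iff (hC 1) hq hqL).2
      ((hC 0).forall_mem_iff_of_le (hC 1) hq hqL le_rfl h)
  · exact ((hC 0).trF_eq_trF_iff (hC 1) hL le_rfl).1 (h L hL le_rfl)

/-- Part 2 of the chain lemma: for two nested chains `g_{1,j} ⊆ ⋯ ⊆ g_{L,j}` (`j = 0, 1`)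
with `|g_{q,j}| = n_q`, arising as `g_{q,j} = β^{n_q}(η_{q,j})` for the products
`η_{q,j} = γ_{f_{q,j}}⁻¹ ⋯ γ_{f_{1,j}}⁻¹` of standard coset representatives, the following
are equivalent: (A) `tr^{n_L}(η_{L,0}) = tr^{n_L}(η_{L,1})`; (B) the unique order-preserving
bijection `τ' : g_{L,0} → g_{L,1}` satisfies `τ'(g_{q,0}) = g_{q,1}` for all `1 ≤ q ≤ L`;
(C) `tr^{n_q}(η_{q,0}) = tr^{n_q}(η_{q,1})` for all `1 ≤ q ≤ L`. -/
theorem chain_lemma_part_two (n L : ℕ) (hL : 1 ≤ L)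
    (γ : Finset (Fin n) → Equiv.Perm (Fin n)) (hγ : IsStdRep γ)
    (nseq : ℕ → ℕ)
    (hmono : ∀ q, 1 ≤ q → q < L → nseq q ≤ nseq (q + 1))
    (hlen : ∀ q, 1 ≤ q → q ≤ L → nseq q ≤ n)
    (f : Fin 2 → ℕ → Finset (Fin n))
    (hcard : ∀ j q, 1 ≤ q → q ≤ L → (f j q).card = nseq q)
    (η : Fin 2 → ℕ → Equiv.Perm (Fin n)) (hη0 : ∀ j, η j 0 = 1)
    (hηrec : ∀ j q, 1 ≤ q → q ≤ L → η j q = (γ (f j q))⁻¹ * η j (q - 1))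
    (g : Fin 2 → ℕ → Finset (Fin n))
    (hg : ∀ j q, 1 ≤ q → q ≤ L → g j q = betaF (nseq q) (η j q))
    (hnested : ∀ j q, 1 ≤ q → q < L → g j q ⊆ g j (q + 1))
    (hcontain : ∀ j q, 2 ≤ q → q ≤ L → Ilt n (nseq (q - 1)) ⊆ f j q) :
    ((trF γ (nseq L) (η 0 L) = trF γ (nseq L) (η 1 L)) ↔
      (∀ (τ : {x // x ∈ g 0 L} ≃o {x // x ∈ g 1 L}) (q : ℕ), 1 ≤ q → q ≤ L →
        ∀ x : {x // x ∈ g 0 L}, ((x : Fin n) ∈ g 0 q ↔ ((τ x : {x // x ∈ g 1 L}) : Fin n) ∈ g 1 q))) ∧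
    ((trF γ (nseq L) (η 0 L) = trF γ (nseq L) (η 1 L)) ↔
      (∀ q, 1 ≤ q → q ≤ L → trF γ (nseq q) (η 0 q) = trF γ (nseq q) (η 1 q))) :=
  chain_lemma_part_two_general n L hL γ hγ nseq f hcard η hη0 hηrec g hg hcontain
end

section
/- Let k be a commutative ring, m ≥ 0, and W a k[S_m]-module. For n ≥ m, define M(W)_n = Ind_{S_m × S_{n-m}}^{S_n} (W ⊠ k), the induced representation where S_{n-m} acts trivially on k. Then restricting from S_{n+1} to S_n gives a natural isomorphism of k[S_n]-modules: Res^{S_{n+1}}_{S_n} Ind_{S_m × S_{n+1-m}}^{S_{n+1}} (W ⊠ k) ≅ Ind_{S_m × S_{n-m}}^{S_n} (W ⊠ k) ⊕ Ind_{S_{m-1} × S_{n-m+1}}^{S_n} ((Res^{S_m}_{S_{m-1}} W) ⊠ k). -/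
open Equiv

/-- The Young subgroup `S_m × S_{n-m}` of `S_n`: permutations preserving the partition
given by the predicate `i < m` on `Fin n`. -/
def young (n m : ℕ) : Subgroup (Equiv.Perm (Fin n)) where
  carrier := {σ | ∀ i : Fin n, ((σ i : ℕ) < m ↔ (i : ℕ) < m)}
  one_mem' := fun _ => Iff.rfl
  mul_mem' := by
    intro a b ha hb i
    simpa [Equiv.Perm.mul_apply] using (ha (b i)).trans (hb i)
  inv_mem' := by
    intro a ha i
    simpa using (ha (a⁻¹ i)).symm

/-- The first block `{i : Fin n | i < m}` identified with `Fin m`. -/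
def blockEquiv (n m : ℕ) (h : m ≤ n) : Fin m ≃ {i : Fin n // (i : ℕ) < m} where
  toFun i := ⟨⟨(i : ℕ), lt_of_lt_of_le i.2 h⟩, i.2⟩
  invFun j := ⟨(j.1 : ℕ), j.2⟩
  left_inv := fun i => rfl
  right_inv := fun j => rfl

/-- Projection of the Young subgroup onto the symmetric group of the first block,
`S_m × S_{n-m} → S_m`. -/
def youngToBlock (n m : ℕ) (h : m ≤ n) : ↥(young n m) →* Equiv.Perm (Fin m) where
  toFun σ := Equiv.permCongr (blockEquiv n m h).symm
    (Equiv.Perm.subtypePerm σ.1 (fun i => (σ.2 i)))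
  map_one' := Equiv.ext fun _ => rfl
  map_mul' := fun _ _ => Equiv.ext fun _ => rfl

/-- The submodule of relations defining the induced module
`Ind_H^G W = k[G] ⊗_{k[H]} W`: the span of `(g·h) ⊗ w - g ⊗ (h·w)`. -/
noncomputable def indRelations (k : Type) [CommRing k] {G : Type} [Group G] (H : Subgroup G)
    {W : Type} [AddCommGroup W] [Module k W] (ρ : Representation k (↥H) W) :
    Submodule k (G →₀ W) :=
  Submodule.span k {x | ∃ (g : G) (h : ↥H) (w : W),
    x = Finsupp.single (g * (h : G)) w - Finsupp.single g (ρ h w)}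

/-- The carrier of the induced module `Ind_H^G W`. -/
abbrev IndCar (k : Type) [CommRing k] {G : Type} [Group G] (H : Subgroup G)
    {W : Type} [AddCommGroup W] [Module k W] (ρ : Representation k (↥H) W) :=
  (G →₀ W) ⧸ indRelations k H ρ

/-- The induced representation of `G` on `Ind_H^G W`, given by left translation on the
`G`-coordinate. -/
noncomputable def indRep (k : Type) [CommRing k] {G : Type} [Group G] (H : Subgroup G)
    {W : Type} [AddCommGroup W] [Module k W] (ρ : Representation k (↥H) W) :
    Representation k G (IndCar k H ρ) where
  toFun σ := Submodule.mapQ _ _ (Finsupp.lmapDomain W k (fun g => σ * g)) (by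
    rw [indRelations, Submodule.span_le]
    rintro x ⟨g, h, w, rfl⟩
    simp only [SetLike.mem_coe, Submodule.mem_comap, map_sub, Finsupp.lmapDomain_apply,
      Finsupp.mapDomain_single]
    exact Submodule.subset_span ⟨σ * g, h, w, by rw [mul_assoc]⟩)
  map_one' := by
    refine LinearMap.ext fun x => ?_
    obtain ⟨y, rfl⟩ := Submodule.Quotient.mk_surjective _ x
    simp only [Submodule.mapQ_apply, one_mul, Module.End.one_apply]
    exact congrArg _ Finsupp.mapDomain_id
  map_mul' := by
    intro σ τ
    refine LinearMap.ext fun x => ?_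
    obtain ⟨y, rfl⟩ := Submodule.Quotient.mk_surjective _ x
    simp [Submodule.mapQ_apply, ← Finsupp.mapDomain_comp, Function.comp, mul_assoc]

/-!
Mackey's formula for two double cosets. Restricted to `S_n`, the cosets of
`Y = S_m × S_{n+1-m}` in `S_{n+1}` form two orbits, according as `g⁻¹ n` lies outside or inside
the first block, i.e. `S_{n+1} = S_n Y ⊔ S_n (m-1 n) Y`. A double coset `S_n t Y` contributes the
module induced from `S_n ∩ t Y t⁻¹` with the `t`-conjugated action, and here
`S_n ∩ Y = S_m × S_{n-m}`, while `S_n ∩ (m-1 n) Y (m-1 n)` is `S_{m-1} × S_{n-m+1}`, acting on `W`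
through `S_{m-1} ⊆ S_m`.
-/

section Induced

variable {k : Type} [CommRing k] {G : Type} [Group G] {H : Subgroup G}
  {W : Type} [AddCommGroup W] [Module k W]

noncomputable def indMk (ρ : Representation k H W) (g : G) : W →ₗ[k] IndCar k H ρ :=
  (indRelations k H ρ).mkQ ∘ₗ Finsupp.lsingle g

variable (ρ : Representation k H W)

theorem indMk_mul (g : G) (h : H) (w : W) : indMk ρ (g * h) w = indMk ρ g (ρ h w) :=
  (Submodule.Quotient.eq _).2 (Submodule.subset_span ⟨g, h, w, rfl⟩)

theorem indRep_indMk (σ g : G) (w : W) : indRep k H ρ σ (indMk ρ g w) = indMk ρ (σ * g) w := by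
  simp [indRep, indMk]

theorem IndCar.linearMap_ext {M : Type} [AddCommGroup M] [Module k M]
    {F F' : IndCar k H ρ →ₗ[k] M} (h : ∀ g, F ∘ₗ indMk ρ g = F' ∘ₗ indMk ρ g) : F = F' :=
  Submodule.linearMap_qext _ (Finsupp.lhom_ext' h)

noncomputable def indLift {M : Type} [AddCommGroup M] [Module k M] (f : G → W →ₗ[k] M)
    (hf : ∀ (g : G) (h : H), f (g * h) = f g ∘ₗ ρ h) : IndCar k H ρ →ₗ[k] M :=
  (indRelations k H ρ).liftQ (Finsupp.lsum k f) <| (Submodule.span_le).2 <| by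
    rintro _ ⟨g, h, w, rfl⟩
    simp only [SetLike.mem_coe, LinearMap.mem_ker, map_sub, Finsupp.lsum_single, hf,
      LinearMap.comp_apply, sub_self]

theorem indLift_indMk {M : Type} [AddCommGroup M] [Module k M] (f : G → W →ₗ[k] M) (hf)
    (g : G) (w : W) : indLift ρ f hf (indMk ρ g w) = f g w :=
  (Submodule.liftQ_apply _ _ _).trans (Finsupp.lsum_single k f g w)

end Induced

section Mackey

variable {k : Type} [CommRing k] {G G' : Type} [Group G] [Group G'] {H : Subgroup G}
  {H' : Subgroup G'} {W : Type} [AddCommGroup W] [Module k W]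

/-- `H' = φ⁻¹ (t H t⁻¹)`, acting on `W` through `y ↦ ρ (t⁻¹ φ y t)`: the stabiliser data of the
double coset `φ(G') t H`. -/
structure IsConjRestriction (ρ : Representation k H W) (φ : G' →* G) (t : G)
    (ρ' : Representation k H' W) : Prop where
  mem_iff : ∀ y, y ∈ H' ↔ t⁻¹ * φ y * t ∈ H
  apply_eq : ∀ y : H', ρ' y = ρ ⟨t⁻¹ * φ y * t, (mem_iff y).1 y.2⟩

variable {ρ : Representation k H W} {φ : G' →* G} {t : G} {ρ' : Representation k H' W}
  (hc : IsConjRestriction ρ φ t ρ')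
include hc

theorem IsConjRestriction.indMk_eq {x x' : G'} {h h' : H} (he : φ x * t * h = φ x' * t * h')
    (w : W) : indMk ρ' x (ρ h w) = indMk ρ' x' (ρ h' w) := by
  have hy : t⁻¹ * φ (x⁻¹ * x') * t = ↑(h * h'⁻¹) := by
    rw [map_mul, map_inv, Subgroup.coe_mul, Subgroup.coe_inv]
    calc t⁻¹ * ((φ x)⁻¹ * φ x') * t = (φ x * t)⁻¹ * (φ x' * t * h') * (h' : G)⁻¹ := by group
      _ = h * (h' : G)⁻¹ := by rw [← he]; group
  have hmem : x⁻¹ * x' ∈ H' := (hc.mem_iff _).2 (hy ▸ (h * h'⁻¹).2)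
  calc indMk ρ' x (ρ h w) = indMk ρ' x (ρ' ⟨_, hmem⟩ (ρ h' w)) := by
        rw [hc.apply_eq, ← Module.End.mul_apply, ← map_mul]
        congr 3
        ext
        simp only [Subgroup.coe_mul, hy, Subgroup.coe_inv, inv_mul_cancel_right]
    _ = indMk ρ' x' (ρ h' w) := by
        rw [← indMk_mul]
        simp

noncomputable def mackeyIncl : IndCar k H' ρ' →ₗ[k] IndCar k H ρ :=
  indLift ρ' (fun y => indMk ρ (φ y * t)) fun y h => by
    ext w
    simp only [LinearMap.comp_apply, hc.apply_eq, ← indMk_mul]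
    congr 2
    simp [mul_assoc]

theorem mackeyIncl_indMk (y : G') (w : W) : mackeyIncl hc (indMk ρ' y w) = indMk ρ (φ y * t) w :=
  indLift_indMk _ _ _ _ _

theorem mackeyIncl_indRep (σ : G') (x : IndCar k H' ρ') :
    mackeyIncl hc (indRep k H' ρ' σ x) = indRep k H ρ (φ σ) (mackeyIncl hc x) := by
  have : mackeyIncl hc ∘ₗ indRep k H' ρ' σ = indRep k H ρ (φ σ) ∘ₗ mackeyIncl hc :=
    IndCar.linearMap_ext _ fun y => by
      ext w
      simp [indRep_indMk, mackeyIncl_indMk, mul_assoc]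
  exact LinearMap.congr_fun this x

open Classical in
/-- `g ⊗ w ↦ x ⊗ h w` for any factorisation `g = φ x * t * h`; the choice does not matter by
`IsConjRestriction.indMk_eq`. -/
noncomputable def mackeyProj : IndCar k H ρ →ₗ[k] IndCar k H' ρ' :=
  indLift ρ (fun g => if hg : ∃ (x : G') (h : H), φ x * t * h = g then
      indMk ρ' hg.choose ∘ₗ ρ hg.choose_spec.choose else 0) fun g h₀ => by
    have hiff : (∃ (x : G') (h : H), φ x * t * h = g * h₀) ↔ ∃ (x : G') (h : H), φ x * t * h = g :=
      ⟨fun ⟨x, h, he⟩ => ⟨x, h * h₀⁻¹, by simp [← mul_assoc, he]⟩,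
        fun ⟨x, h, he⟩ => ⟨x, h * h₀, by simp [← mul_assoc, he]⟩⟩
    by_cases hg : ∃ (x : G') (h : H), φ x * t * h = g
    · rw [dif_pos (hiff.2 hg), dif_pos hg, LinearMap.comp_assoc, ← Module.End.mul_eq_comp,
        ← map_mul]
      ext w
      refine hc.indMk_eq ?_ w
      rw [(hiff.2 hg).choose_spec.choose_spec, Subgroup.coe_mul, ← mul_assoc,
        hg.choose_spec.choose_spec]
    · rw [dif_neg (mt hiff.1 hg), dif_neg hg, LinearMap.zero_comp]

theorem mackeyProj_indMk {x : G'} {h : H} {g : G} (he : φ x * t * h = g) (w : W) :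
    mackeyProj hc (indMk ρ g w) = indMk ρ' x (ρ h w) := by
  have hg : ∃ (x : G') (h : H), φ x * t * h = g := ⟨x, h, he⟩
  rw [mackeyProj, indLift_indMk, dif_pos hg]
  exact hc.indMk_eq (hg.choose_spec.choose_spec.trans he.symm) w

theorem mackeyProj_indMk_eq_zero {g : G} (hg : ¬ ∃ (x : G') (h : H), φ x * t * h = g) (w : W) :
    mackeyProj hc (indMk ρ g w) = 0 := by
  rw [mackeyProj, indLift_indMk, dif_neg hg, LinearMap.zero_apply]

theorem mackeyProj_comp_mackeyIncl : mackeyProj hc ∘ₗ mackeyIncl hc = LinearMap.id :=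
  IndCar.linearMap_ext _ fun y => by
    ext w
    simp [mackeyIncl_indMk,
      mackeyProj_indMk hc (by simp : φ y * t * ((1 : H) : G) = φ y * t)]

theorem mackeyIncl_mackeyProj_indMk {x : G'} {h : H} {g : G} (he : φ x * t * h = g) (w : W) :
    mackeyIncl hc (mackeyProj hc (indMk ρ g w)) = indMk ρ g w := by
  rw [mackeyProj_indMk hc he, mackeyIncl_indMk, ← indMk_mul, he]

theorem mackeyProj_comp_mackeyIncl_eq_zero {t' : G} {H'' : Subgroup G'}
    {ρ'' : Representation k H'' W} (hc' : IsConjRestriction ρ φ t' ρ'')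
    (hdisj : ∀ (x : G') (h : H), ¬ ∃ (x' : G') (h' : H), φ x' * t' * h' = φ x * t * h) :
    mackeyProj hc' ∘ₗ mackeyIncl hc = 0 :=
  IndCar.linearMap_ext _ fun y => by
    ext w
    simp only [LinearMap.comp_apply, mackeyIncl_indMk, LinearMap.zero_apply]
    exact mackeyProj_indMk_eq_zero hc' (by simpa using hdisj y 1) w

end Mackey

section MackeyTwoCosets

variable {k : Type} [CommRing k] {G G' : Type} [Group G] [Group G'] {H : Subgroup G}
  {H₁ H₂ : Subgroup G'} {W : Type} [AddCommGroup W] [Module k W]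
  {ρ : Representation k H W} {φ : G' →* G} {t₁ t₂ : G}
  {ρ₁ : Representation k H₁ W} {ρ₂ : Representation k H₂ W}
  (hc₁ : IsConjRestriction ρ φ t₁ ρ₁) (hc₂ : IsConjRestriction ρ φ t₂ ρ₂)
  (hpart : ∀ g, (∃ (x : G') (h : H), φ x * t₁ * h = g) ↔ ¬ ∃ (x : G') (h : H), φ x * t₂ * h = g)

noncomputable def mackeyEquiv : IndCar k H ρ ≃ₗ[k] IndCar k H₁ ρ₁ × IndCar k H₂ ρ₂ :=
  LinearEquiv.ofLinearMap ((mackeyProj hc₁).prod (mackeyProj hc₂))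
    ((mackeyIncl hc₁).coprod (mackeyIncl hc₂))
    (by
      have h₁₂ := mackeyProj_comp_mackeyIncl_eq_zero hc₁ hc₂
        fun x h => (hpart _).1 ⟨x, h, rfl⟩
      have h₂₁ := mackeyProj_comp_mackeyIncl_eq_zero hc₂ hc₁
        fun x h => mt (hpart _).1 (not_not.2 ⟨x, h, rfl⟩)
      rw [LinearMap.comp_coprod, LinearMap.prod_comp, LinearMap.prod_comp,
        mackeyProj_comp_mackeyIncl, mackeyProj_comp_mackeyIncl, h₁₂, h₂₁,
        ← LinearMap.inl_eq_prod, ← LinearMap.inr_eq_prod, LinearMap.coprod_inl_inr])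
    (IndCar.linearMap_ext _ fun g => by
      ext w
      by_cases hg : ∃ (x : G') (h : H), φ x * t₁ * h = g
      · obtain ⟨x, h, he⟩ := hg
        simp [mackeyIncl_mackeyProj_indMk hc₁ he,
          mackeyProj_indMk_eq_zero hc₂ ((hpart g).1 ⟨x, h, he⟩)]
      · obtain ⟨x, h, he⟩ := not_not.1 (mt (hpart g).2 hg)
        simp [mackeyIncl_mackeyProj_indMk hc₂ he, mackeyProj_indMk_eq_zero hc₁ hg])

theorem mackeyEquiv_indRep (σ : G') (x : IndCar k H ρ) :
    mackeyEquiv hc₁ hc₂ hpart (indRep k H ρ (φ σ) x) =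
      (indRep k H₁ ρ₁ σ (mackeyEquiv hc₁ hc₂ hpart x).1,
        indRep k H₂ ρ₂ σ (mackeyEquiv hc₁ hc₂ hpart x).2) := by
  set e := mackeyEquiv hc₁ hc₂ hpart
  obtain ⟨y, rfl⟩ := e.symm.surjective x
  have : indRep k H ρ (φ σ) (e.symm y) = e.symm (indRep k H₁ ρ₁ σ y.1, indRep k H₂ ρ₂ σ y.2) := by
    simp [e, mackeyEquiv, mackeyIncl_indRep]
  rw [this, e.apply_symm_apply, e.apply_symm_apply]

end MackeyTwoCosets

section CastLE

open Equiv.Perm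

variable {M N : ℕ} (hMN : M ≤ N) (σ : Perm (Fin M))

theorem viaEmbeddingHom_castLEEmb_apply_castLE (i : Fin M) :
    viaEmbeddingHom (Fin.castLEEmb hMN) σ (Fin.castLE hMN i) = Fin.castLE hMN (σ i) :=
  viaEmbedding_apply σ (Fin.castLEEmb hMN) i

theorem viaEmbeddingHom_castLEEmb_apply_of_le {i : Fin N} (hi : M ≤ i) :
    viaEmbeddingHom (Fin.castLEEmb hMN) σ i = i :=
  viaEmbedding_apply_of_notMem σ _ i <| by
    rintro ⟨j, rfl⟩
    exact absurd hi (not_le.2 j.2)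

theorem viaEmbeddingHom_castLEEmb_mem_young_iff {K : ℕ} :
    viaEmbeddingHom (Fin.castLEEmb hMN) σ ∈ young N K ↔ σ ∈ young M K := by
  constructor
  · intro hσ i
    simpa [viaEmbeddingHom_castLEEmb_apply_castLE] using hσ (Fin.castLE hMN i)
  · intro hσ i
    rcases lt_or_ge (i : ℕ) M with hi | hi
    · obtain ⟨j, rfl⟩ : ∃ j, Fin.castLE hMN j = i := ⟨⟨i, hi⟩, rfl⟩
      simpa [viaEmbeddingHom_castLEEmb_apply_castLE] using hσ j
    · rw [viaEmbeddingHom_castLEEmb_apply_of_le hMN σ hi]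

theorem youngToBlock_viaEmbeddingHom_castLEEmb {K : ℕ} (hKM : K ≤ M) (hσ : σ ∈ young M K) :
    youngToBlock N K (hKM.trans hMN) ⟨viaEmbeddingHom (Fin.castLEEmb hMN) σ,
      (viaEmbeddingHom_castLEEmb_mem_young_iff hMN σ).2 hσ⟩ = youngToBlock M K hKM ⟨σ, hσ⟩ := by
  ext i
  exact (congrArg Fin.val (viaEmbeddingHom_castLEEmb_apply_castLE hMN σ ⟨i, by omega⟩) :)

theorem exists_viaEmbeddingHom_castLEEmb_eq {n : ℕ} {g : Perm (Fin (n + 1))}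
    (hg : g (Fin.last n) = Fin.last n) :
    ∃ x : Perm (Fin n), viaEmbeddingHom (Fin.castLEEmb n.le_succ) x = g := by
  have hne {f : Perm (Fin (n + 1))} (hf : f (Fin.last n) = Fin.last n) (i : Fin n) :
      f i.castSucc ≠ Fin.last n :=
    fun h => Fin.castSucc_ne_last i (f.injective (h.trans hf.symm))
  have hg' : g⁻¹ (Fin.last n) = Fin.last n := by rw [Perm.inv_eq_iff_eq, hg]
  refine ⟨⟨fun i => (g i.castSucc).castPred (hne hg i),
    fun i => (g⁻¹ i.castSucc).castPred (hne hg' i),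
    fun i => by
      simp only [Fin.castSucc_castPred, Perm.coe_inv, symm_apply_apply, Fin.castPred_castSucc],
    fun i => by
      simp only [Fin.castSucc_castPred, Perm.coe_inv, apply_symm_apply, Fin.castPred_castSucc]⟩,
    ?_⟩
  ext i : 1
  induction i using Fin.lastCases with
  | last => rw [viaEmbeddingHom_castLEEmb_apply_of_le _ _ (Fin.val_last n).ge, hg]
  | cast i =>
    exact (viaEmbeddingHom_castLEEmb_apply_castLE n.le_succ _ i).trans
      (Fin.castSucc_castPred _ (hne hg i))

end CastLE

section Young

open Equiv.Perm

variable {N M : ℕ}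

theorem swap_mem_young {a b : Fin N} (h : (a : ℕ) < M ↔ (b : ℕ) < M) :
    swap a b ∈ young N M := by
  intro i
  rcases eq_or_ne i a with rfl | hia
  · simpa using h.symm
  rcases eq_or_ne i b with rfl | hib
  · simpa using h
  · rw [swap_apply_of_ne_of_ne hia hib]

theorem youngToBlock_swap_of_le (hMN : M ≤ N) {a b : Fin N} (ha : M ≤ a) (hb : M ≤ b) :
    youngToBlock N M hMN ⟨swap a b, swap_mem_young (by omega)⟩ = 1 := by
  ext i
  have hi : (i : ℕ) < M := i.2
  have := swap_apply_of_ne_of_ne (x := ⟨i, by omega⟩) (a := a) (b := b)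
    (by rw [ne_eq, Fin.ext_iff, Fin.val_mk]; omega) (by rw [ne_eq, Fin.ext_iff, Fin.val_mk]; omega)
  exact (congrArg Fin.val this :)

theorem mem_young_succ_iff (hMN : M < N) {σ : Perm (Fin N)} (hσ : σ ⟨M, hMN⟩ = ⟨M, hMN⟩) :
    σ ∈ young N (M + 1) ↔ σ ∈ young N M := by
  refine forall_congr' fun i => ?_
  rcases eq_or_ne i ⟨M, hMN⟩ with rfl | hi
  · simp [hσ]
  · have hσi : (σ i : ℕ) ≠ M := Fin.val_ne_of_ne (hσ ▸ σ.injective.ne hi)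
    have hi' : (i : ℕ) ≠ M := Fin.val_ne_of_ne hi
    omega

theorem youngToBlock_succ (hMN : M + 1 ≤ N) {σ : Perm (Fin N)} (hσ : σ ⟨M, hMN⟩ = ⟨M, hMN⟩)
    (hmem : σ ∈ young N M) :
    youngToBlock N (M + 1) hMN ⟨σ, (mem_young_succ_iff hMN hσ).2 hmem⟩ =
      viaEmbeddingHom (Fin.castLEEmb M.le_succ) (youngToBlock N M (by omega) ⟨σ, hmem⟩) := by
  ext i
  rcases lt_or_ge (i : ℕ) M with hi | hi
  · have h := viaEmbeddingHom_castLEEmb_apply_castLE M.le_succ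
      (youngToBlock N M (by omega) ⟨σ, hmem⟩) ⟨i, hi⟩
    exact (congrArg Fin.val h).symm
  · rw [viaEmbeddingHom_castLEEmb_apply_of_le _ _ hi]
    obtain rfl : i = Fin.last M := Fin.ext (by rw [Fin.val_last]; omega)
    exact (congrArg Fin.val hσ :)

end Young

section Branching

open Equiv.Perm

variable {k : Type} [CommRing k] {W : Type} [AddCommGroup W] [Module k W] {m n : ℕ}

theorem isConjRestriction_young_one (ρW : Representation k (Perm (Fin m)) W) (hmn : m ≤ n) :
    IsConjRestriction (ρW.comp (youngToBlock (n + 1) m (hmn.trans n.le_succ)))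
      (viaEmbeddingHom (Fin.castLEEmb n.le_succ)) 1 (ρW.comp (youngToBlock n m hmn)) where
  mem_iff y := by rw [inv_one, one_mul, mul_one, viaEmbeddingHom_castLEEmb_mem_young_iff]
  apply_eq y := by
    simp only [MonoidHom.coe_comp, Function.comp_apply]
    rw [← youngToBlock_viaEmbeddingHom_castLEEmb n.le_succ y.1 hmn y.2]
    congr 2

theorem isConjRestriction_young_swap (ρW : Representation k (Perm (Fin (m + 1))) W)
    (hmn : m < n) :
    IsConjRestriction (ρW.comp (youngToBlock (n + 1) (m + 1) (by omega)))
      (viaEmbeddingHom (Fin.castLEEmb n.le_succ)) (swap ⟨m, by omega⟩ (Fin.last n))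
      ((ρW.comp (viaEmbeddingHom (Fin.castLEEmb m.le_succ))).comp
        (youngToBlock n m hmn.le)) := by
  set t : Perm (Fin (n + 1)) := swap ⟨m, by omega⟩ (Fin.last n)
  have ht : t ∈ young (n + 1) m := swap_mem_young (by simp only [Fin.val_last]; omega)
  have hfix (y : Perm (Fin n)) : (t⁻¹ * viaEmbeddingHom (Fin.castLEEmb n.le_succ) y * t)
      ⟨m, by omega⟩ = ⟨m, by omega⟩ := by
    simp [t, viaEmbeddingHom_castLEEmb_apply_of_le]
  have hmem (y : Perm (Fin n)) : t⁻¹ * viaEmbeddingHom (Fin.castLEEmb n.le_succ) y * t ∈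
      young (n + 1) m ↔ y ∈ young n m := by
    rw [Subgroup.mul_mem_cancel_right _ ht, Subgroup.mul_mem_cancel_left _ (inv_mem ht),
      viaEmbeddingHom_castLEEmb_mem_young_iff]
  refine ⟨fun y => by rw [mem_young_succ_iff (by omega) (hfix y), hmem], fun y => ?_⟩
  simp only [MonoidHom.coe_comp, Function.comp_apply]
  congr 1
  rw [youngToBlock_succ (by omega) (hfix y) ((hmem y).2 y.2)]
  have ht₁ : youngToBlock (n + 1) m (by omega) ⟨t, ht⟩ = 1 :=
    youngToBlock_swap_of_le _ le_rfl (by simp only [Fin.val_last]; omega)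
  have hy := (viaEmbeddingHom_castLEEmb_mem_young_iff n.le_succ y.1).2 y.2
  refine congrArg _ (Eq.symm ?_)
  calc youngToBlock (n + 1) m _ ⟨t⁻¹ * viaEmbeddingHom (Fin.castLEEmb n.le_succ) y * t, _⟩
      = youngToBlock (n + 1) m (by omega) (⟨t, ht⟩⁻¹ * ⟨_, hy⟩ * ⟨t, ht⟩) := rfl
    _ = youngToBlock (n + 1) m (by omega) ⟨_, hy⟩ := by simp [ht₁]
    _ = youngToBlock n m hmn.le y := youngToBlock_viaEmbeddingHom_castLEEmb n.le_succ y.1 _ y.2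

theorem inv_apply_last_of_viaEmbeddingHom_mul_eq {x : Perm (Fin n)} {t h g : Perm (Fin (n + 1))}
    (he : viaEmbeddingHom (Fin.castLEEmb n.le_succ) x * t * h = g) :
    g⁻¹ (Fin.last n) = h⁻¹ (t⁻¹ (Fin.last n)) := by
  subst he
  simp [mul_inv_rev, ← map_inv, viaEmbeddingHom_castLEEmb_apply_of_le]

theorem exists_viaEmbeddingHom_mul_young_eq_iff (hmn : m ≤ n) (g : Perm (Fin (n + 1))) :
    (∃ (x : Perm (Fin n)) (h : young (n + 1) m),
      viaEmbeddingHom (Fin.castLEEmb n.le_succ) x * 1 * h = g) ↔ m ≤ g⁻¹ (Fin.last n) := by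
  constructor
  · rintro ⟨x, h, he⟩
    have := (inv_mem h.2) (Fin.last n)
    rw [inv_apply_last_of_viaEmbeddingHom_mul_eq he, inv_one, Perm.one_apply]
    simp only [Fin.val_last] at this
    omega
  · intro hg
    have hs : swap (g⁻¹ (Fin.last n)) (Fin.last n) ∈ young (n + 1) m :=
      swap_mem_young (by simp only [Fin.val_last]; omega)
    obtain ⟨x, hx⟩ := exists_viaEmbeddingHom_castLEEmb_eq
      (g := g * swap (g⁻¹ (Fin.last n)) (Fin.last n)) (by simp)
    exact ⟨x, ⟨_, hs⟩, by simp [hx, mul_assoc]⟩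

theorem exists_viaEmbeddingHom_mul_swap_mul_young_eq_iff (hmn : m < n) (g : Perm (Fin (n + 1))) :
    (∃ (x : Perm (Fin n)) (h : young (n + 1) (m + 1)),
      viaEmbeddingHom (Fin.castLEEmb n.le_succ) x * swap ⟨m, by omega⟩ (Fin.last n) * h = g) ↔
      g⁻¹ (Fin.last n) ≤ m := by
  constructor
  · rintro ⟨x, h, he⟩
    have := (inv_mem h.2) ⟨m, by omega⟩
    rw [inv_apply_last_of_viaEmbeddingHom_mul_eq he, swap_inv, swap_apply_right]
    dsimp only at this
    omega
  · intro hg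
    have hs : swap ⟨m, by omega⟩ (g⁻¹ (Fin.last n)) ∈ young (n + 1) (m + 1) :=
      swap_mem_young (by dsimp only; omega)
    obtain ⟨x, hx⟩ := exists_viaEmbeddingHom_castLEEmb_eq
      (g := g * swap ⟨m, by omega⟩ (g⁻¹ (Fin.last n)) * swap ⟨m, by omega⟩ (Fin.last n)) (by simp)
    exact ⟨x, ⟨_, hs⟩, by simp [hx, mul_assoc]⟩

end Branching

/-- Branching rule for restriction of induced modules: for a commutative ring `k` and a
`k[S_m]`-module `W` (with `1 ≤ m ≤ n`), restricting the induced `S_{n+1}`-module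
`Ind_{S_m × S_{n+1-m}}^{S_{n+1}}(W ⊠ k)` along the standard inclusion `S_n ⊆ S_{n+1}`
yields a natural isomorphism of `k[S_n]`-modules
`Res Ind_{S_m × S_{n+1-m}}^{S_{n+1}}(W ⊠ k)
  ≅ Ind_{S_m × S_{n-m}}^{S_n}(W ⊠ k) ⊕ Ind_{S_{m-1} × S_{n-m+1}}^{S_n}((Res W) ⊠ k)`. -/
theorem restriction_of_induced_decomposition
    (k : Type) [CommRing k] (m n : ℕ) (hm1 : 1 ≤ m) (hmn : m ≤ n)
    (W : Type) [AddCommGroup W] [Module k W]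
    (ρW : Representation k (Equiv.Perm (Fin m)) W) :
    ∃ e : IndCar k (young (n + 1) m)
            (ρW.comp (youngToBlock (n + 1) m (le_trans hmn (Nat.le_succ n)))) ≃ₗ[k]
          (IndCar k (young n m) (ρW.comp (youngToBlock n m hmn))) ×
          (IndCar k (young n (m - 1))
            ((ρW.comp (Equiv.Perm.viaEmbeddingHom (Fin.castLEEmb (Nat.sub_le m 1)))).comp
              (youngToBlock n (m - 1) (le_trans (Nat.sub_le m 1) hmn)))),
      ∀ (σ : Equiv.Perm (Fin n)) x,
        e (indRep k (young (n + 1) m)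
            (ρW.comp (youngToBlock (n + 1) m (le_trans hmn (Nat.le_succ n))))
            (Equiv.Perm.viaEmbeddingHom (Fin.castLEEmb (Nat.le_succ n)) σ) x)
          = (indRep k (young n m) (ρW.comp (youngToBlock n m hmn)) σ (e x).1,
             indRep k (young n (m - 1))
              ((ρW.comp (Equiv.Perm.viaEmbeddingHom (Fin.castLEEmb (Nat.sub_le m 1)))).comp
                (youngToBlock n (m - 1) (le_trans (Nat.sub_le m 1) hmn))) σ (e x).2) := by
  -- afterwards `m + 1 - 1` is definitionally `m`
  obtain ⟨m, rfl⟩ := Nat.exists_eq_add_of_le' hm1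
  refine ⟨mackeyEquiv (isConjRestriction_young_one ρW hmn) (isConjRestriction_young_swap ρW hmn)
    fun g => ?_, mackeyEquiv_indRep _ _ _⟩
  rw [exists_viaEmbeddingHom_mul_young_eq_iff hmn g,
    exists_viaEmbeddingHom_mul_swap_mul_young_eq_iff hmn g]
  omega
end

section
/- Work over F_2 and fix d ≥ 3. Let M(d)_d = F_2[S_d] (the regular representation, with basis the bijections f : {1,...,d} → {1,...,d}), let K ⊆ M(d)_d be the subspace spanned by the element Σ_{f ∈ S_d} f, and let W = M(d)_d / K. Then the space of S_d-invariants W^{S_d} is one-dimensional, spanned by the image of Σ_{f ∈ A_d} f, where A_d is the alternating group. -/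
/-!
Write `N` for the sum of all elements of a finite group `G` in `R[G]`. Since `R ∙ N` consists
of the constant functions `G → R`, the class of `y` in `R[G] / R ∙ N` is fixed by left
multiplication by `σ` iff `g ↦ y (σ⁻¹ g) - y g` is constant; for all `σ` at once this says
exactly that `g ↦ y g - y 1` is a homomorphism from `G` to the additive group of `R`.
Over `𝔽₂` and for `G = S_d` the only such homomorphisms are `0` and the sign, and they give the
classes `0` and `[∑_{A_d} f]`; the latter is nonzero because the sign is not constant on `S_d`
once `d ≥ 2`.
-/
open Equiv

/-- The sum of all group elements in `F₂[S_d]`. -/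
noncomputable def allSum (d : ℕ) : MonoidAlgebra (ZMod 2) (Equiv.Perm (Fin d)) :=
  ∑ f : Equiv.Perm (Fin d), MonoidAlgebra.single f (1 : ZMod 2)

/-- The sum of all even permutations in `F₂[S_d]`. -/
noncomputable def altSum (d : ℕ) : MonoidAlgebra (ZMod 2) (Equiv.Perm (Fin d)) :=
  ∑ f ∈ @Finset.filter _ (fun f => f ∈ alternatingGroup (Fin d)) (Classical.decPred _)
      Finset.univ,
    MonoidAlgebra.single f (1 : ZMod 2)

open MonoidAlgebra

theorem forall_exists_sub_eq_iff_exists_monoidHom {G A : Type*} [Group G] [AddCommGroup A]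
    (f : G → A) :
    (∀ σ, ∃ c, ∀ g, f (σ * g) - f g = c) ↔
      ∃ χ : G →* Multiplicative A, ∀ g, f g = f 1 + (χ g).toAdd := by
  constructor
  · intro h
    have hf : ∀ σ g, f (σ * g) = f σ + f g - f 1 := by
      intro σ g
      obtain ⟨c, hc⟩ := h σ
      have h1 := hc 1
      rw [mul_one] at h1
      rw [← sub_add_cancel (f (σ * g)) (f g), hc g, ← h1]
      abel
    refine ⟨{ toFun := fun g => .ofAdd (f g - f 1), map_one' := ?_, map_mul' := ?_ }, ?_⟩
    · simp
    · intro σ τ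
      simp only [hf, ← ofAdd_add]
      abel_nf
    · intro g
      simp
  · rintro ⟨χ, hχ⟩ σ
    exact ⟨(χ σ).toAdd, fun g => by rw [hχ (σ * g), hχ g, map_mul, toAdd_mul]; abel⟩

section Semiring

variable (R G : Type*) [Semiring R] [Fintype G]

noncomputable def groupSum : MonoidAlgebra R G := ∑ g : G, single g 1

variable {R G}

theorem coeff_groupSum (g : G) : (groupSum R G).coeff g = 1 := by
  classical
  simp [groupSum]

theorem mem_span_groupSum_iff {z : MonoidAlgebra R G} :
    z ∈ R ∙ groupSum R G ↔ ∃ c, ∀ g, z.coeff g = c := by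
  rw [Submodule.mem_span_singleton]
  constructor
  · rintro ⟨c, rfl⟩
    exact ⟨c, fun g => by simp [coeff_groupSum]⟩
  · rintro ⟨c, hc⟩
    exact ⟨c, by ext g; simp [coeff_groupSum, hc]⟩

end Semiring

section Ring

variable {R G : Type*} [Ring R] [Fintype G]

theorem mk_eq_mk_iff_exists_coeff_sub_eq {y z : MonoidAlgebra R G} :
    Submodule.Quotient.mk (p := R ∙ groupSum R G) y = Submodule.Quotient.mk z ↔
      ∃ c, ∀ g, y.coeff g - z.coeff g = c := by
  rw [Submodule.Quotient.eq, mem_span_groupSum_iff]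
  simp [coeff_sub]

theorem mk_single_mul_eq_mk_iff [Group G] (σ : G) (y : MonoidAlgebra R G) :
    Submodule.Quotient.mk (p := R ∙ groupSum R G) (single σ 1 * y) = Submodule.Quotient.mk y ↔
      ∃ c, ∀ g, y.coeff (σ⁻¹ * g) - y.coeff g = c := by
  simp [mk_eq_mk_iff_exists_coeff_sub_eq, coeff_single_mul_apply]

theorem forall_mk_single_mul_eq_mk_iff [Group G] (y : MonoidAlgebra R G) :
    (∀ σ, Submodule.Quotient.mk (p := R ∙ groupSum R G) (single σ 1 * y) =
        Submodule.Quotient.mk y) ↔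
      ∃ χ : G →* Multiplicative R, ∀ g, y.coeff g = y.coeff 1 + (χ g).toAdd := by
  simp only [mk_single_mul_eq_mk_iff]
  rw [← forall_exists_sub_eq_iff_exists_monoidHom, (Equiv.inv G).forall_congr_left]
  simp

end Ring

def zmodTwoMulEquivUnitsInt : Multiplicative (ZMod 2) ≃* ℤˣ where
  toFun z := (-1) ^ z.toAdd
  invFun u := .ofAdd (if u = 1 then 0 else 1)
  left_inv := by decide
  right_inv := by decide
  map_mul' a b := uzpow_add _ _ _

namespace Equiv.Perm

variable {α : Type*} [Fintype α] [DecidableEq α]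

def signChar : Perm α →* Multiplicative (ZMod 2) :=
  zmodTwoMulEquivUnitsInt.symm.toMonoidHom.comp sign

theorem signChar_apply (g : Perm α) : signChar g = zmodTwoMulEquivUnitsInt.symm (sign g) := rfl

theorem eq_one_or_eq_signChar (χ : Perm α →* Multiplicative (ZMod 2)) :
    χ = 1 ∨ χ = signChar := by
  refine or_iff_not_imp_left.2 fun hχ => ?_
  obtain ⟨g, hg⟩ : ∃ g, χ g ≠ 1 := by
    by_contra! h
    exact hχ (MonoidHom.ext h)
  have hsurj : Function.Surjective (zmodTwoMulEquivUnitsInt.toMonoidHom.comp χ) := by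
    intro u
    rcases Int.units_eq_one_or u with rfl | rfl
    · exact ⟨1, map_one _⟩
    · exact ⟨g, Int.units_ne_iff_eq_neg.1 (by simpa using hg)⟩
  ext g
  simp [signChar, ← eq_sign_of_surjective_hom hsurj]

end Equiv.Perm

open Equiv.Perm

theorem coeff_altSum (d : ℕ) (g : Perm (Fin d)) :
    (altSum d).coeff g = 1 + (signChar g).toAdd := by
  classical
  simp only [altSum, coeff_sum, coeff_single, Finsupp.finsetSum_apply, Finsupp.single_apply]
  rw [Finset.sum_ite_eq']
  simp only [Finset.mem_filter, Finset.mem_univ, true_and, mem_alternatingGroup]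
  rw [signChar_apply]
  rcases Int.units_eq_one_or (sign g) with h | h <;> rw [h] <;> decide

theorem allSum_eq_groupSum (d : ℕ) : allSum d = groupSum (ZMod 2) (Perm (Fin d)) := rfl

theorem mk_altSum_ne_zero {d : ℕ} (hd : 2 ≤ d) :
    Submodule.Quotient.mk (p := ZMod 2 ∙ groupSum (ZMod 2) (Perm (Fin d))) (altSum d) ≠ 0 := by
  have : Nontrivial (Fin d) := Fin.nontrivial_iff_two_le.2 hd
  obtain ⟨t, ht⟩ := sign_surjective (α := Fin d) (-1)
  rw [Ne, Submodule.Quotient.mk_eq_zero, mem_span_groupSum_iff]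
  rintro ⟨c, hc⟩
  have h := (hc t).trans (hc 1).symm
  rw [coeff_altSum, coeff_altSum, signChar_apply, signChar_apply, ht, Perm.sign_one] at h
  exact absurd h (by decide)

/-- For `d ≥ 3` and `W = F₂[S_d] / ⟨∑_{f ∈ S_d} f⟩`, with `S_d` acting by left
multiplication (descended to the quotient as `lmul`), the invariant space `W^{S_d}` is
one-dimensional, spanned by the image of `∑_{f ∈ A_d} f`. -/
theorem invariants_regular_mod_allSum (d : ℕ) (hd : 3 ≤ d)
    (K : Submodule (ZMod 2) (MonoidAlgebra (ZMod 2) (Equiv.Perm (Fin d))))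
    (hK : K = Submodule.span (ZMod 2) {allSum d})
    (lmul : Equiv.Perm (Fin d) →
      (MonoidAlgebra (ZMod 2) (Equiv.Perm (Fin d)) ⧸ K) →ₗ[ZMod 2]
        (MonoidAlgebra (ZMod 2) (Equiv.Perm (Fin d)) ⧸ K))
    (hlmul : ∀ σ x, lmul σ (Submodule.Quotient.mk x)
        = Submodule.Quotient.mk (MonoidAlgebra.single σ (1 : ZMod 2) * x)) :
    (Submodule.Quotient.mk (p := K) (altSum d) ≠ 0) ∧
    (∀ x, (∀ σ, lmul σ x = x) ↔
      (x = 0 ∨ x = Submodule.Quotient.mk (p := K) (altSum d))) := by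
  rw [allSum_eq_groupSum] at hK
  subst hK
  refine ⟨mk_altSum_ne_zero (by omega), fun x => ⟨fun hx => ?_, ?_⟩⟩
  · obtain ⟨y, rfl⟩ := Submodule.Quotient.mk_surjective _ x
    simp only [hlmul] at hx
    obtain ⟨χ, hy⟩ := (forall_mk_single_mul_eq_mk_iff y).1 hx
    rcases eq_one_or_eq_signChar χ with rfl | rfl
    · left
      rw [Submodule.Quotient.mk_eq_zero, mem_span_groupSum_iff]
      exact ⟨y.coeff 1, by simpa using hy⟩
    · right
      rw [mk_eq_mk_iff_exists_coeff_sub_eq]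
      exact ⟨y.coeff 1 - 1, fun g => by rw [hy, coeff_altSum]; ring⟩
  · rintro (rfl | rfl) σ
    · exact map_zero _
    · rw [hlmul]
      revert σ
      rw [forall_mk_single_mul_eq_mk_iff]
      refine ⟨signChar, fun g => ?_⟩
      rw [coeff_altSum, coeff_altSum d 1, map_one, toAdd_one, add_zero]
end

section
/- Work over F_2 with d odd, d ≥ 3. Let V be the quotient of the FI-module M(0) ⊕ M(d) by the sub-FI-module generated by (1, Σ_{f: [d]→[d] bijective} f) ∈ (M(0) ⊕ M(d))_d. Then for n ≥ d, dim_{F_2} V_n^{S_n} = 2 if and only if the binomial coefficient C(n−2, d−2) is even, and dim_{F_2} V_n^{S_n} = 1 otherwise. In particular dim V_n^{S_n} is eventually periodic in n with period a power of 2, and for d = 5 the smallest eventual period is 4. -/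
open Equiv

/-- Degree-`n` part of `M(0) ⊕ M(d)` over `F₂`: `F₂ × F₂[Inj(Fin d, Fin n)]`. -/
abbrev MBig (d n : ℕ) := ZMod 2 × ((Fin d ↪ Fin n) →₀ ZMod 2)

/-- Degree-`n` part of the sub-FI-module of `M(0) ⊕ M(d)` generated by
`(1, ∑_{f : [d] → [d] bijective} f)`: spanned by the elements
`(1, ∑_{τ ∈ S_d} τ ∘ g)` for injections `g : Fin d ↪ Fin n`. -/
noncomputable def Ksub (d n : ℕ) : Submodule (ZMod 2) (MBig d n) :=
  Submodule.span (ZMod 2)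
    {x | ∃ g : Fin d ↪ Fin n,
      x = (1, ∑ τ : Equiv.Perm (Fin d),
        Finsupp.single (τ.toEmbedding.trans g) (1 : ZMod 2))}

/-- Degree-`n` part of the quotient FI-module `V = (M(0) ⊕ M(d)) / ⟨(1, ∑_f f)⟩`. -/
abbrev VQuot (d n : ℕ) := MBig d n ⧸ Ksub d n

/-!
A pair `(c, ψ)` lies in `Ksub d n` iff `ψ` is constant on the orbits of `S_d` acting by
precomposition and `c` is the sum of `ψ` over the increasing embeddings, one per orbit.
If the class of `(c, φ)` is `S_n`-invariant, every `σ • φ - φ` is `S_d`-invariant; as `S_n` is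
transitive on embeddings, `φ (g ∘ τ) - φ g` is then a character of `S_d`, i.e. `b · sgn τ`, and
`φ - b · ε` is `S_d`-invariant, where `ε g` is the sign of the permutation sorting `g`. So the
invariants lie in the span of the independent classes `u = [(1, 0)]` and `p = [(0, ε)]`; `u` is
invariant, and `p` is invariant iff the character `σ ↦ ∑_{g increasing} ε (σ ∘ g)` of `S_n`
vanishes. Evaluating it on an adjacent transposition, which only reorders the increasing `g`
whose image contains both swapped points, shows that it equals `C(n-2, d-2) · sgn σ`.
-/

open Finset

section Sign
variable {α : Type*} [DecidableEq α] [Fintype α]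

noncomputable def sgn2 (τ : Perm α) : ZMod 2 := if Perm.sign τ = 1 then 0 else 1

lemma sgn2_mul (σ τ : Perm α) : sgn2 (σ * τ) = sgn2 σ + sgn2 τ := by
  unfold sgn2
  rcases Int.units_eq_one_or (Perm.sign σ) with h1 | h1 <;>
    rcases Int.units_eq_one_or (Perm.sign τ) with h2 | h2 <;>
    simp [Perm.sign_mul, h1, h2]
  all_goals decide

lemma sgn2_swap {x y : α} (h : x ≠ y) : sgn2 (swap x y) = 1 := by
  simp [sgn2, Perm.sign_swap h]

lemma eq_mul_sgn2_of_map_mul {x y : α} (hxy : x ≠ y) (χ : Perm α → ZMod 2)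
    (hχ : ∀ σ τ, χ (σ * τ) = χ σ + χ τ) (τ : Perm α) : χ τ = χ (swap x y) * sgn2 τ := by
  have hone : χ 1 = 0 := by simpa using hχ 1 1
  -- all transpositions are conjugate, and `χ` is constant on conjugacy classes
  have hswap : ∀ a b : α, a ≠ b → χ (swap a b) = χ (swap x y) := by
    intro a b hab
    obtain ⟨c, hc⟩ := isConj_iff.mp (Perm.isConj_swap hxy hab)
    have hinv : χ c + χ c⁻¹ = 0 := by rw [← hχ, mul_inv_cancel, hone]
    rw [← hc, hχ, hχ]
    linear_combination hinv
  induction τ using Perm.swap_induction_on with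
  | one => simp [hone, sgn2]
  | swap_mul f a b hab ih => rw [hχ, sgn2_mul, hswap a b hab, ih, sgn2_swap hab]; ring

end Sign

lemma range_precomp {β γ : Type*} (τ : Perm β) (g : β ↪ γ) :
    Set.range (τ.toEmbedding.trans g) = Set.range g := by
  rw [Function.Embedding.coe_trans, Equiv.coe_toEmbedding, EquivLike.range_comp]

section LinearOrder
variable {α : Type*} [LinearOrder α] {d : ℕ}

noncomputable def sortEmb (g : Fin d ↪ α) : Fin d ↪ α :=
  (Tuple.sort g).toEmbedding.trans g

noncomputable def sortPerm (g : Fin d ↪ α) : Perm (Fin d) := (Tuple.sort g)⁻¹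

lemma strictMono_sortEmb (g : Fin d ↪ α) : StrictMono (sortEmb g) :=
  (Tuple.monotone_sort g).strictMono_of_injective (sortEmb g).injective

lemma range_sortEmb (g : Fin d ↪ α) : Set.range (sortEmb g) = Set.range g :=
  range_precomp _ g

lemma sortPerm_trans_sortEmb (g : Fin d ↪ α) :
    (sortPerm g).toEmbedding.trans (sortEmb g) = g := by
  ext i; simp [sortEmb, sortPerm]

lemma eq_sortEmb {g h : Fin d ↪ α} (hh : StrictMono h) (hr : Set.range h = Set.range g) :
    h = sortEmb g :=
  DFunLike.coe_injective <|
    (hh.range_inj (strictMono_sortEmb g)).mp (hr.trans (range_sortEmb g).symm)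

lemma sortEmb_of_strictMono {g : Fin d ↪ α} (hg : StrictMono g) : sortEmb g = g :=
  (eq_sortEmb hg rfl).symm

lemma sortEmb_sortEmb (g : Fin d ↪ α) : sortEmb (sortEmb g) = sortEmb g :=
  sortEmb_of_strictMono (strictMono_sortEmb g)

lemma sortEmb_precomp (τ : Perm (Fin d)) (g : Fin d ↪ α) :
    sortEmb (τ.toEmbedding.trans g) = sortEmb g :=
  (eq_sortEmb (strictMono_sortEmb g) <| by
    rw [range_sortEmb, range_precomp]).symm

lemma eq_sortPerm {τ : Perm (Fin d)} {g : Fin d ↪ α}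
    (h : τ.toEmbedding.trans (sortEmb g) = g) : τ = sortPerm g :=
  Equiv.ext fun i => (sortEmb g).injective <|
    (DFunLike.congr_fun h i).trans (DFunLike.congr_fun (sortPerm_trans_sortEmb g) i).symm

lemma sortPerm_precomp (τ : Perm (Fin d)) (g : Fin d ↪ α) :
    sortPerm (τ.toEmbedding.trans g) = sortPerm g * τ := by
  refine (eq_sortPerm ?_).symm
  rw [sortEmb_precomp]
  exact Function.Embedding.ext fun i => DFunLike.congr_fun (sortPerm_trans_sortEmb g) (τ i)

lemma sortPerm_of_strictMono {g : Fin d ↪ α} (hg : StrictMono g) : sortPerm g = 1 :=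
  (eq_sortPerm (g := g) (by rw [sortEmb_of_strictMono hg]; rfl)).symm

noncomputable def embSign (g : Fin d ↪ α) : ZMod 2 := sgn2 (sortPerm g)

lemma embSign_precomp (τ : Perm (Fin d)) (g : Fin d ↪ α) :
    embSign (τ.toEmbedding.trans g) = embSign g + sgn2 τ := by
  rw [embSign, sortPerm_precomp, sgn2_mul, embSign]

lemma embSign_of_strictMono {g : Fin d ↪ α} (hg : StrictMono g) : embSign g = 0 := by
  simp [embSign, sortPerm_of_strictMono hg, sgn2]

lemma swap_lt_swap_of_covBy {a b x y : α} (hab : a ⋖ b) (hxy : x < y)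
    (h : ¬ (x = a ∧ y = b)) : swap a b x < swap a b y := by
  have hlt := hab.lt
  have hle : ∀ c, a < c → b ≤ c := fun _ => hab.ge_of_gt
  have hge : ∀ c, c < b → c ≤ a := fun _ => hab.le_of_lt
  simp only [swap_apply_def]
  split_ifs <;> grind

lemma embSign_swap_smul {a b : α} (hab : a ⋖ b) {h : Fin d ↪ α}
    (hh : StrictMono h) :
    embSign (swap a b • h) = if a ∈ Set.range h ∧ b ∈ Set.range h then 1 else 0 := by
  split_ifs with hr
  · obtain ⟨⟨i, rfl⟩, ⟨j, rfl⟩⟩ := hr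
    have hij : i ≠ j := by rintro rfl; exact hab.lt.ne rfl
    have : swap (h i) (h j) • h = (swap i j).toEmbedding.trans h :=
      Function.Embedding.ext fun k => h.injective.swap_apply i j k
    rw [this, embSign_precomp, embSign_of_strictMono hh, sgn2_swap hij, zero_add]
  · refine embSign_of_strictMono fun i j hij => swap_lt_swap_of_covBy hab (hh hij) ?_
    rintro ⟨hi, hj⟩
    exact hr ⟨⟨i, hi⟩, ⟨j, hj⟩⟩

noncomputable def orbitSum (g : Fin d ↪ α) : (Fin d ↪ α) →₀ ZMod 2 :=
  ∑ τ : Perm (Fin d), Finsupp.single (τ.toEmbedding.trans g) 1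

lemma precomp_eq_iff_of_strictMono {h g : Fin d ↪ α} (hh : StrictMono h) (τ : Perm (Fin d)) :
    τ.toEmbedding.trans h = g ↔ h = sortEmb g ∧ τ = sortPerm g := by
  constructor
  · rintro rfl
    have hrep : h = sortEmb (τ.toEmbedding.trans h) := by
      rw [sortEmb_precomp, sortEmb_of_strictMono hh]
    exact ⟨hrep, eq_sortPerm (hrep ▸ rfl)⟩
  · rintro ⟨rfl, rfl⟩
    exact sortPerm_trans_sortEmb g

lemma orbitSum_sortEmb (g : Fin d ↪ α) : orbitSum (sortEmb g) = orbitSum g := by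
  conv_rhs => rw [orbitSum, ← sortPerm_trans_sortEmb g]
  exact (Equiv.sum_comp (Equiv.mulLeft (sortPerm g)) _).symm

lemma orbitSum_apply (g g' : Fin d ↪ α) :
    orbitSum g g' = if sortEmb g = sortEmb g' then 1 else 0 := by
  rw [← orbitSum_sortEmb, orbitSum, Finsupp.finsetSum_apply]
  simp only [Finsupp.single_apply, precomp_eq_iff_of_strictMono (strictMono_sortEmb g), ite_and]
  simp

end LinearOrder

theorem finrank_eq_of_le_span_pair {K V : Type*} [DivisionRing K] [AddCommGroup V] [Module K V]
    {W : Submodule K V} {u p : V} (hup : LinearIndependent K ![u, p]) (hu : u ∈ W)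
    (hW : W ≤ Submodule.span K {u, p}) [Decidable (p ∈ W)] :
    Module.finrank K W = if p ∈ W then 2 else 1 := by
  split_ifs with hp
  · have hWeq : W = Submodule.span K (Set.range ![u, p]) := by
      rw [Matrix.range_cons_cons_empty]
      exact le_antisymm hW (Submodule.span_le.mpr (Set.insert_subset_iff.mpr ⟨hu, by simpa⟩))
    rw [hWeq, finrank_span_eq_card hup, Fintype.card_fin]
  · have hWeq : W = K ∙ u := by
      refine le_antisymm (fun x hx => ?_) ((Submodule.span_singleton_le_iff_mem _ _).mpr hu)
      obtain ⟨a, b, rfl⟩ := Submodule.mem_span_pair.mp (hW hx)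
      obtain rfl : b = 0 := by
        by_contra hb
        refine hp ?_
        simpa [smul_smul, inv_mul_cancel₀ hb] using
          W.smul_mem b⁻¹ (W.sub_mem hx (W.smul_mem a hu))
      simpa using Submodule.smul_mem _ a (Submodule.mem_span_singleton_self u)
    rw [hWeq, finrank_span_singleton (by simpa using hup.ne_zero 0)]

section Quotient
variable {d n : ℕ}

def precompInvariants (d n : ℕ) : Submodule (ZMod 2) ((Fin d ↪ Fin n) →₀ ZMod 2) where
  carrier := {ψ | ∀ (τ : Perm (Fin d)) g, ψ (τ.toEmbedding.trans g) = ψ g}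
  add_mem' hψ hφ τ g := by simp [hψ τ g, hφ τ g]
  zero_mem' _ _ := rfl
  smul_mem' c ψ hψ τ g := by simp [hψ τ g]

lemma apply_sortEmb {ψ : (Fin d ↪ Fin n) →₀ ZMod 2} (hψ : ψ ∈ precompInvariants d n)
    (g : Fin d ↪ Fin n) : ψ (sortEmb g) = ψ g := by
  conv_rhs => rw [← sortPerm_trans_sortEmb g]
  exact (hψ _ _).symm

lemma orbitSum_mem_precompInvariants (g : Fin d ↪ Fin n) :
    orbitSum g ∈ precompInvariants d n := fun τ g' => by
  rw [orbitSum_apply, orbitSum_apply, sortEmb_precomp]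

/-- The increasing embeddings form a system of representatives of the `S_d`-orbits. -/
noncomputable def monoSum (d n : ℕ) : ((Fin d ↪ Fin n) →₀ ZMod 2) →ₗ[ZMod 2] ZMod 2 :=
  ∑ h ∈ univ.filter (fun h : Fin d ↪ Fin n => StrictMono h), Finsupp.lapply h

lemma monoSum_apply (ψ : (Fin d ↪ Fin n) →₀ ZMod 2) :
    monoSum d n ψ = ∑ h ∈ univ.filter (fun h : Fin d ↪ Fin n => StrictMono h), ψ h := by
  simp [monoSum]

lemma monoSum_orbitSum (g : Fin d ↪ Fin n) : monoSum d n (orbitSum g) = 1 := by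
  rw [monoSum_apply, sum_eq_single_of_mem (sortEmb g) (by simpa using strictMono_sortEmb g)]
  · simp [orbitSum_apply, sortEmb_sortEmb]
  · intro h hh hne
    rw [orbitSum_apply, sortEmb_of_strictMono (mem_filter.mp hh).2, if_neg (Ne.symm hne)]

lemma mem_Ksub_iff {c : ZMod 2} {ψ : (Fin d ↪ Fin n) →₀ ZMod 2} :
    (c, ψ) ∈ Ksub d n ↔ ψ ∈ precompInvariants d n ∧ monoSum d n ψ = c := by
  constructor
  · intro hK
    let KP : Submodule (ZMod 2) (MBig d n) :=
      (precompInvariants d n).comap (LinearMap.snd _ _ _) ⊓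
        LinearMap.ker (monoSum d n ∘ₗ LinearMap.snd _ _ _ - LinearMap.fst _ _ _)
    have hKP : ∀ x : MBig d n, x ∈ KP ↔ x.2 ∈ precompInvariants d n ∧ monoSum d n x.2 = x.1 := by
      simp [KP, sub_eq_zero]
    have hle : Ksub d n ≤ KP := by
      refine Submodule.span_le.mpr ?_
      rintro _ ⟨g, rfl⟩
      exact (hKP _).mpr ⟨orbitSum_mem_precompInvariants g, monoSum_orbitSum g⟩
    exact (hKP _).mp (hle hK)
  · rintro ⟨hψ, rfl⟩
    have hsum : ((monoSum d n ψ, ψ) : MBig d n) =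
        ∑ h ∈ univ.filter (fun h : Fin d ↪ Fin n => StrictMono h),
          ψ h • ((1 : ZMod 2), orbitSum h) := by
      refine Prod.ext ?_ (Finsupp.ext fun g => ?_)
      · simp [monoSum_apply, Prod.fst_sum]
      · rw [Prod.snd_sum, Finsupp.finsetSum_apply,
          sum_eq_single_of_mem (sortEmb g) (by simpa using strictMono_sortEmb g)]
        · simp [orbitSum_apply, sortEmb_sortEmb, apply_sortEmb hψ]
        · intro h hh hne
          rw [Prod.smul_snd, Finsupp.smul_apply, orbitSum_apply,
            sortEmb_of_strictMono (mem_filter.mp hh).2, if_neg hne, smul_zero]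
    rw [hsum]
    exact Submodule.sum_mem _ fun h _ => Submodule.smul_mem _ _ (Submodule.subset_span ⟨h, rfl⟩)

noncomputable def injRep (d n : ℕ) :
    Representation (ZMod 2) (Perm (Fin n)) ((Fin d ↪ Fin n) →₀ ZMod 2) where
  toFun σ := Finsupp.lmapDomain (ZMod 2) (ZMod 2) (σ • ·)
  map_one' := by ext; simp
  map_mul' σ τ := by ext; simp [mul_smul]

lemma injRep_apply (σ : Perm (Fin n)) (ψ : (Fin d ↪ Fin n) →₀ ZMod 2) :
    injRep d n σ ψ = Finsupp.mapDomain (σ • ·) ψ := rfl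

lemma injRep_apply_apply (σ : Perm (Fin n)) (ψ : (Fin d ↪ Fin n) →₀ ZMod 2)
    (g : Fin d ↪ Fin n) : injRep d n σ ψ g = ψ (σ⁻¹ • g) := by
  conv_lhs => rw [← smul_inv_smul σ g]
  exact Finsupp.mapDomain_apply (MulAction.injective σ) ψ _

lemma injRep_orbitSum (σ : Perm (Fin n)) (g : Fin d ↪ Fin n) :
    injRep d n σ (orbitSum g) = orbitSum (σ • g) := by
  simp only [injRep_apply, orbitSum, Finsupp.mapDomain_finsetSum, Finsupp.mapDomain_single]
  rfl

noncomputable def sumRep (d n : ℕ) : Representation (ZMod 2) (Perm (Fin n)) (MBig d n) :=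
  (Representation.trivial (ZMod 2) (Perm (Fin n)) (ZMod 2)).prod (injRep d n)

lemma sumRep_apply (σ : Perm (Fin n)) (c : ZMod 2) (ψ : (Fin d ↪ Fin n) →₀ ZMod 2) :
    sumRep d n σ (c, ψ) = (c, injRep d n σ ψ) := by
  simp [sumRep]

lemma Ksub_le_comap_sumRep (σ : Perm (Fin n)) : Ksub d n ≤ (Ksub d n).comap (sumRep d n σ) := by
  refine Submodule.span_le.mpr ?_
  rintro _ ⟨g, rfl⟩
  exact Submodule.subset_span ⟨σ • g, by rw [sumRep_apply]; exact congrArg _ (injRep_orbitSum σ g)⟩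

noncomputable def quotRep (d n : ℕ) : Representation (ZMod 2) (Perm (Fin n)) (VQuot d n) :=
  (sumRep d n).quotient (Ksub d n) Ksub_le_comap_sumRep

lemma quotRep_mk (σ : Perm (Fin n)) (c : ZMod 2) (ψ : (Fin d ↪ Fin n) →₀ ZMod 2) :
    quotRep d n σ (Submodule.Quotient.mk (c, ψ)) = Submodule.Quotient.mk (c, injRep d n σ ψ) := by
  simp [quotRep, sumRep_apply]

lemma mk_mem_invariants_iff (c : ZMod 2) (ψ : (Fin d ↪ Fin n) →₀ ZMod 2) :
    Submodule.Quotient.mk (c, ψ) ∈ (quotRep d n).invariants ↔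
      ∀ σ, injRep d n σ ψ - ψ ∈ precompInvariants d n ∧ monoSum d n (injRep d n σ ψ - ψ) = 0 := by
  simp only [Representation.mem_invariants, quotRep_mk, Submodule.Quotient.eq, Prod.mk_sub_mk,
    sub_self, mem_Ksub_iff]

lemma monoSum_injRep {ψ : (Fin d ↪ Fin n) →₀ ZMod 2} (hψ : ψ ∈ precompInvariants d n)
    (σ : Perm (Fin n)) : monoSum d n (injRep d n σ ψ) = monoSum d n ψ := by
  have hK := Ksub_le_comap_sumRep σ (mem_Ksub_iff.mpr ⟨hψ, rfl⟩)
  rw [Submodule.mem_comap, sumRep_apply] at hK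
  exact (mem_Ksub_iff.mp hK).2

noncomputable def signVec (d n : ℕ) : (Fin d ↪ Fin n) →₀ ZMod 2 :=
  Finsupp.equivFunOnFinite.symm embSign

lemma signVec_apply (g : Fin d ↪ Fin n) : signVec d n g = embSign g := rfl

lemma injRep_signVec_sub_mem (σ : Perm (Fin n)) :
    injRep d n σ (signVec d n) - signVec d n ∈ precompInvariants d n := fun τ g => by
  simp only [Finsupp.coe_sub, Pi.sub_apply, injRep_apply_apply, signVec_apply]
  rw [show σ⁻¹ • τ.toEmbedding.trans g = τ.toEmbedding.trans (σ⁻¹ • g) from rfl,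
    embSign_precomp, embSign_precomp]
  ring

lemma signVec_not_mem (hd : 2 ≤ d) (hdn : d ≤ n) : signVec d n ∉ precompInvariants d n := by
  intro h
  have h01 : (⟨0, by omega⟩ : Fin d) ≠ ⟨1, by omega⟩ := by simp
  have := h (swap ⟨0, by omega⟩ ⟨1, by omega⟩) (Fin.castLEEmb hdn)
  rw [signVec_apply, signVec_apply, embSign_precomp, sgn2_swap h01] at this
  simp at this

noncomputable def signShift (d n : ℕ) (σ : Perm (Fin n)) : ZMod 2 :=
  monoSum d n (injRep d n σ (signVec d n) - signVec d n)

lemma signShift_mul (σ τ : Perm (Fin n)) :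
    signShift d n (σ * τ) = signShift d n σ + signShift d n τ := by
  have hsplit : injRep d n (σ * τ) (signVec d n) - signVec d n =
      injRep d n σ (injRep d n τ (signVec d n) - signVec d n) +
        (injRep d n σ (signVec d n) - signVec d n) := by
    rw [map_mul, Module.End.mul_apply, map_sub]
    abel
  rw [signShift, hsplit, map_add, monoSum_injRep (injRep_signVec_sub_mem τ), add_comm]
  rfl

lemma card_strictMono_mem_range (hd : 2 ≤ d) {a b : Fin n} (hab : a ≠ b) :
    #{h : Fin d ↪ Fin n | StrictMono h ∧ a ∈ Set.range h ∧ b ∈ Set.range h} =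
      (n - 2).choose (d - 2) := by
  have hcard := card_filter_powersetCard_subset {a, b} univ d (subset_univ _)
    (by rw [card_pair hab]; omega)
  rw [card_univ, Fintype.card_fin, card_pair hab] at hcard
  rw [← hcard]
  have hrange : ∀ h : Fin d ↪ Fin n, (↑(univ.map h) : Set (Fin n)) = Set.range h := by
    simp
  refine card_bij (fun h _ => univ.map h) ?_ ?_ ?_
  · intro h hh
    simp only [mem_filter, mem_univ, true_and] at hh
    refine mem_filter.mpr ⟨mem_powersetCard.mpr ⟨subset_univ _, by simp⟩, ?_⟩
    rw [insert_subset_iff, singleton_subset_iff, ← mem_coe, ← mem_coe, hrange]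
    exact hh.2
  · intro h₁ hh₁ h₂ hh₂ he
    simp only [mem_filter, mem_univ, true_and] at hh₁ hh₂
    have := congrArg (fun s : Finset (Fin n) => (s : Set (Fin n))) he
    simp only [hrange] at this
    exact DFunLike.coe_injective ((hh₁.1.range_inj hh₂.1).mp this)
  · intro S hS
    simp only [mem_filter, mem_powersetCard, insert_subset_iff, singleton_subset_iff] at hS
    refine ⟨(S.orderEmbOfFin hS.1.2).toEmbedding, ?_, map_orderEmbOfFin_univ S hS.1.2⟩
    simp only [mem_filter, mem_univ, true_and, RelEmbedding.coe_toEmbedding,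
      range_orderEmbOfFin, mem_coe]
    exact ⟨(S.orderEmbOfFin hS.1.2).strictMono, hS.2⟩

lemma signShift_swap (hd : 2 ≤ d) {a b : Fin n} (hab : a ⋖ b) :
    signShift d n (swap a b) = (n - 2).choose (d - 2) := by
  rw [signShift, monoSum_apply, ← card_strictMono_mem_range hd hab.lt.ne, ← filter_filter,
    ← sum_boole]
  refine sum_congr rfl fun h hh => ?_
  have hh : StrictMono h := (mem_filter.mp hh).2
  rw [Finsupp.coe_sub, Pi.sub_apply, injRep_apply_apply, swap_inv, signVec_apply, signVec_apply,
    embSign_of_strictMono hh, sub_zero, embSign_swap_smul hab hh]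

lemma exists_sub_smul_signVec_mem (hd : 2 ≤ d) (hdn : d ≤ n) {φ : (Fin d ↪ Fin n) →₀ ZMod 2}
    (hφ : ∀ σ, injRep d n σ φ - φ ∈ precompInvariants d n) :
    ∃ b : ZMod 2, φ - b • signVec d n ∈ precompInvariants d n := by
  let g₀ : Fin d ↪ Fin n := Fin.castLEEmb hdn
  let χ : Perm (Fin d) → ZMod 2 := fun τ => φ (τ.toEmbedding.trans g₀) - φ g₀
  -- `S_n` is transitive on embeddings, so `φ (g ∘ τ) - φ g` does not depend on `g`
  have hχ : ∀ τ g, φ (τ.toEmbedding.trans g) - φ g = χ τ := by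
    intro τ g
    obtain ⟨σ, rfl⟩ := Perm.exists_smul_eq_embedding g₀ g
    have h := hφ σ⁻¹ τ g₀
    simp only [Finsupp.coe_sub, Pi.sub_apply, injRep_apply_apply, inv_inv] at h
    change φ (σ • τ.toEmbedding.trans g₀) - φ (σ • g₀) = _
    linear_combination h
  have hχ_mul : ∀ τ ρ, χ (τ * ρ) = χ τ + χ ρ := by
    intro τ ρ
    have h := hχ ρ (τ.toEmbedding.trans g₀)
    change φ (ρ.toEmbedding.trans (τ.toEmbedding.trans g₀)) - φ g₀ =
      (φ (τ.toEmbedding.trans g₀) - φ g₀) + χ ρ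
    linear_combination h
  have h01 : (⟨0, by omega⟩ : Fin d) ≠ ⟨1, by omega⟩ := by simp
  obtain ⟨b, hsgn⟩ : ∃ b, ∀ τ, χ τ = b * sgn2 τ := ⟨_, eq_mul_sgn2_of_map_mul h01 χ hχ_mul⟩
  refine ⟨b, fun τ g => ?_⟩
  simp only [Finsupp.coe_sub, Finsupp.coe_smul, Pi.sub_apply, Pi.smul_apply, smul_eq_mul,
    signVec_apply, embSign_precomp]
  linear_combination hχ τ g + hsgn τ

lemma invariants_le_span (hd : 2 ≤ d) (hdn : d ≤ n) :
    (quotRep d n).invariants ≤ Submodule.span (ZMod 2)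
      {Submodule.Quotient.mk (1, 0), Submodule.Quotient.mk (0, signVec d n)} := by
  intro x hx
  obtain ⟨⟨c, φ⟩, rfl⟩ := Submodule.Quotient.mk_surjective _ x
  obtain ⟨b, hb⟩ := exists_sub_smul_signVec_mem hd hdn
    fun σ => ((mk_mem_invariants_iff c φ).mp hx σ).1
  have hK := (Ksub d n).neg_mem (mem_Ksub_iff.mpr ⟨hb, rfl⟩)
  refine Submodule.mem_span_pair.mpr ⟨c - monoSum d n (φ - b • signVec d n), b, ?_⟩
  rw [← Submodule.Quotient.mk_smul, ← Submodule.Quotient.mk_smul, ← Submodule.Quotient.mk_add,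
    Submodule.Quotient.eq]
  convert hK using 1
  ext <;> simp

lemma linearIndependent_mk_one_mk_signVec (hd : 2 ≤ d) (hdn : d ≤ n) :
    LinearIndependent (ZMod 2) ![(Submodule.Quotient.mk (1, 0) : VQuot d n),
      Submodule.Quotient.mk (0, signVec d n)] := by
  rw [LinearIndependent.pair_iff]
  intro s t hst
  rw [← Submodule.Quotient.mk_smul, ← Submodule.Quotient.mk_smul, ← Submodule.Quotient.mk_add,
    Submodule.Quotient.mk_eq_zero] at hst
  simp only [Prod.smul_mk, smul_eq_mul, mul_one, smul_zero, Prod.mk_add_mk,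
    zero_add] at hst
  obtain ⟨hP, hsum⟩ := mem_Ksub_iff.mp hst
  obtain rfl : t = 0 := by
    by_contra ht
    refine signVec_not_mem hd hdn ?_
    simpa [smul_smul, inv_mul_cancel₀ ht] using (precompInvariants d n).smul_mem t⁻¹ hP
  simpa [eq_comm] using hsum

lemma mk_signVec_mem_invariants_iff (hd : 2 ≤ d) (hdn : d ≤ n) :
    Submodule.Quotient.mk (0, signVec d n) ∈ (quotRep d n).invariants ↔
      Even ((n - 2).choose (d - 2)) := by
  let a : Fin n := ⟨0, by omega⟩
  let b : Fin n := ⟨1, by omega⟩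
  have hab : a ⋖ b := by simp [a, b, Fin.covBy_iff, Nat.covBy_iff_add_one_eq]
  have hshift := eq_mul_sgn2_of_map_mul (x := a) (y := b) (by simp [a, b]) (signShift d n)
    signShift_mul
  rw [mk_mem_invariants_iff, ← ZMod.natCast_eq_zero_iff_even, ← signShift_swap hd hab]
  exact ⟨fun h => (h _).2, fun h σ => ⟨injRep_signVec_sub_mem σ, by
    rw [← signShift, hshift σ, h, zero_mul]⟩⟩

theorem finrank_invariants_quotRep (hd : 2 ≤ d) (hdn : d ≤ n) :
    Module.finrank (ZMod 2) (quotRep d n).invariants =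
      if Even ((n - 2).choose (d - 2)) then 2 else 1 := by
  classical
  have hu : Submodule.Quotient.mk (1, 0) ∈ (quotRep d n).invariants :=
    (mk_mem_invariants_iff _ _).mpr fun σ => by simp
  rw [finrank_eq_of_le_span_pair (linearIndependent_mk_one_mk_signVec hd hdn) hu
    (invariants_le_span hd hdn)]
  exact if_congr (mk_signVec_mem_invariants_iff hd hdn) rfl rfl

end Quotient

lemma even_choose_add_two_pow_iff {r k : ℕ} (hr : r < 2 ^ k) (m : ℕ) :
    Even ((m + 2 ^ k).choose r) ↔ Even (m.choose r) := by
  rw [← ZMod.natCast_eq_zero_iff_even, ← ZMod.natCast_eq_zero_iff_even, Nat.add_choose_eq,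
    Nat.cast_sum, sum_eq_single (r, 0)]
  · simp
  · rintro ⟨i, j⟩ hij hne
    rw [HasAntidiagonal.mem_antidiagonal] at hij
    have hj : j ≠ 0 := by rintro rfl; simp_all
    rw [Nat.cast_mul, (ZMod.natCast_eq_zero_iff _ _).mpr
      (Nat.prime_two.dvd_choose_pow hj (by omega)), mul_zero]
  · simp

lemma even_choose_three_iff (m : ℕ) : Even (m.choose 3) ↔ m % 4 ≠ 3 := by
  have h := Choose.choose_modEq_choose_mod_mul_choose_div_nat (n := m) (k := 3) (p := 2)
  simp only [Nat.choose_one_right, show 3 % 2 = 1 from rfl, show 3 / 2 = 1 from rfl] at h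
  rw [Nat.even_iff, h]
  rcases Nat.mod_two_eq_zero_or_one m with hm | hm <;> simp [hm] <;> omega

theorem example_one_invariant_dimensions_general (d : ℕ) (hd : 3 ≤ d)
    (actQ : ∀ n, Equiv.Perm (Fin n) → VQuot d n →ₗ[ZMod 2] VQuot d n)
    (hactQ : ∀ n (σ : Equiv.Perm (Fin n)) (c : ZMod 2) (φ : (Fin d ↪ Fin n) →₀ ZMod 2),
      actQ n σ (Submodule.Quotient.mk (c, φ)) =
        Submodule.Quotient.mk (c, Finsupp.mapDomain (fun g => g.trans σ.toEmbedding) φ))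
    (Inv : ∀ n, Submodule (ZMod 2) (VQuot d n))
    (hInv : ∀ n x, x ∈ Inv n ↔ ∀ σ, actQ n σ x = x)
    (F : ℕ → ℕ) (hF : ∀ n, F n = Module.finrank (ZMod 2) ↥(Inv n)) :
    (∀ n, d ≤ n →
      (F n = 2 ↔ Even (Nat.choose (n - 2) (d - 2))) ∧
      (¬ Even (Nat.choose (n - 2) (d - 2)) → F n = 1)) ∧
    (∃ k N : ℕ, ∀ n, N ≤ n → F (n + 2 ^ k) = F n) ∧
    (d = 5 →
      (∃ N, ∀ n, N ≤ n → F (n + 4) = F n) ∧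
      (∀ q, 0 < q → (∃ N, ∀ n, N ≤ n → F (n + q) = F n) → 4 ≤ q)) := by
  have hact : ∀ n σ x, actQ n σ x = quotRep d n σ x := by
    intro n σ x
    obtain ⟨⟨c, φ⟩, rfl⟩ := Submodule.Quotient.mk_surjective _ x
    rw [hactQ, quotRep_mk]
    rfl
  have hFn : ∀ n, d ≤ n → F n = if Even ((n - 2).choose (d - 2)) then 2 else 1 := by
    intro n hn
    have hInv_eq : Inv n = (quotRep d n).invariants := by
      ext x
      simp only [hInv, hact, Representation.mem_invariants]
    rw [hF, hInv_eq, finrank_invariants_quotRep (by omega) hn]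
  refine ⟨fun n hn => ?_, ⟨d, d, fun n hn => ?_⟩, ?_⟩
  · rw [hFn n hn]
    split_ifs with h <;> simp [h]
  · have hlt : d - 2 < 2 ^ d := (Nat.sub_le d 2).trans_lt Nat.lt_two_pow_self
    rw [hFn n hn, hFn _ (by omega), show n + 2 ^ d - 2 = n - 2 + 2 ^ d by omega]
    simp only [even_choose_add_two_pow_iff hlt]
  · rintro rfl
    have hF5 : ∀ n, 5 ≤ n → F n = if n % 4 = 1 then 1 else 2 := fun n hn => by
      rw [hFn n hn]
      simp only [Nat.reduceSub, even_choose_three_iff]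
      split_ifs <;> omega
    refine ⟨⟨5, fun n hn => by rw [hF5 n hn, hF5 _ (by omega), Nat.add_mod_right]⟩, ?_⟩
    rintro q hq ⟨N, hN⟩
    by_contra! hq4
    have h := hN (4 * N + 5) (by omega)
    rw [hF5 _ (by omega), hF5 _ (by omega)] at h
    split_ifs at h <;> omega

/-- Example: over `F₂`, with `d` odd, `d ≥ 3`, and `V = (M(0) ⊕ M(d)) / ⟨(1, ∑_f f)⟩`, the
`S_n`-action (post-composition on injections, descended to the quotient as `actQ`) has
invariants `V_n^{S_n}` of dimension `2` iff `C(n-2,d-2)` is even (and dimension `1`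
otherwise), for `n ≥ d`.  In particular the dimension is eventually periodic in `n` with
period a power of `2`, and for `d = 5` the smallest eventual period is `4`. -/
theorem example_one_invariant_dimensions (d : ℕ) (hd : 3 ≤ d) (hodd : Odd d)
    (actQ : ∀ n, Equiv.Perm (Fin n) → VQuot d n →ₗ[ZMod 2] VQuot d n)
    (hactQ : ∀ n (σ : Equiv.Perm (Fin n)) (c : ZMod 2) (φ : (Fin d ↪ Fin n) →₀ ZMod 2),
      actQ n σ (Submodule.Quotient.mk (c, φ)) =
        Submodule.Quotient.mk (c, Finsupp.mapDomain (fun g => g.trans σ.toEmbedding) φ))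
    (Inv : ∀ n, Submodule (ZMod 2) (VQuot d n))
    (hInv : ∀ n x, x ∈ Inv n ↔ ∀ σ, actQ n σ x = x)
    (F : ℕ → ℕ) (hF : ∀ n, F n = Module.finrank (ZMod 2) ↥(Inv n)) :
    (∀ n, d ≤ n →
      (F n = 2 ↔ Even (Nat.choose (n - 2) (d - 2))) ∧
      (¬ Even (Nat.choose (n - 2) (d - 2)) → F n = 1)) ∧
    (∃ k N : ℕ, ∀ n, N ≤ n → F (n + 2 ^ k) = F n) ∧
    (d = 5 →
      (∃ N, ∀ n, N ≤ n → F (n + 4) = F n) ∧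
      (∀ q, 0 < q → (∃ N, ∀ n, N ≤ n → F (n + q) = F n) → 4 ≤ q)) :=
  example_one_invariant_dimensions_general d hd actQ hactQ Inv hInv F hF
end

section
/- Fix a prime p and an integer D ≥ 0. Define δ_H(b₁,b₂) = v_p((b₁−b₂)!) + 1 if b₁ > b₂ and 0 otherwise, where v_p is the p-adic valuation. Then for all integers 0 ≤ b₂ ≤ b₁ ≤ D, δ_H(b₁, b₂) ≤ max(b₁ − b₂, 0) ≤ D. Consequently, given a tuple (m₁,...,m_d) with each m_i ≤ D and the recursively defined quantities H^{i,r−1} = max(H^{i,r}, H^{r,r} + δ_H(m_r, m_i)) when m_r ≥ m_i (and H^{i,r−1} = H^{i,r} otherwise), starting from H^{i,d} = 0 for all i, one has H^{i,i} ≤ D − m_i for all i, and max_i (H^{i,i} + δ_H(m_i, 0)) ≤ D. -/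
lemma padicValNat_factorial_add_one_le {p : ℕ} (hp : p.Prime) {b : ℕ} (hb : 1 ≤ b) :
    padicValNat p (Nat.factorial b) + 1 ≤ b := by
  haveI : Fact p.Prime := ⟨hp⟩
  have key := sub_one_mul_padicValNat_factorial (p := p) b
  have hb0 : b ≠ 0 := by omega
  have hsum : 1 ≤ (p.digits b).sum := by
    have hlast := Nat.getLast_digit_ne_zero p (m := b) hb0
    have hmem := List.getLast_mem (l := p.digits b) (Nat.digits_ne_nil_iff_ne_zero.mpr hb0)
    have := List.single_le_sum (fun x (_ : x ∈ p.digits b) => Nat.zero_le x) _ hmem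
    omega
  have hsumle := Nat.digit_sum_le p b
  have hle : padicValNat p (Nat.factorial b) ≤ (p - 1) * padicValNat p (Nat.factorial b) :=
    Nat.le_mul_of_pos_left _ (by have := hp.two_le; omega)
  omega

/-- Bounds for the operator `δ_H(b₁,b₂) = v_p((b₁-b₂)!) + 1` (if `b₁ > b₂`, else `0`) and
for the recursively defined quantities `H^{i,r}` (with `H^{i,d} = 0`): one has
`δ_H(b₁,b₂) ≤ max(b₁-b₂,0) ≤ D`, `H^{i,i} ≤ D - m_i`, and
`max_i (H^{i,i} + δ_H(m_i,0)) ≤ D`. -/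
theorem deltaH_recursion_bounds (p D d : ℕ) (hp : p.Prime)
    (δH : ℕ → ℕ → ℕ)
    (hδH : ∀ b₁ b₂ : ℕ,
      δH b₁ b₂ = if b₂ < b₁ then padicValNat p (Nat.factorial (b₁ - b₂)) + 1 else 0)
    (m : ℕ → ℕ) (hm : ∀ i, 1 ≤ i → i ≤ d → m i ≤ D)
    (H : ℕ → ℕ → ℕ)
    (hHd : ∀ i, 1 ≤ i → i ≤ d → H i d = 0)
    (hrec : ∀ i r, 1 ≤ i → i < r → r ≤ d →
      H i (r - 1) = if m i ≤ m r then max (H i r) (H r r + δH (m r) (m i)) else H i r) :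
    (∀ b₁ b₂, b₂ ≤ b₁ → b₁ ≤ D → δH b₁ b₂ ≤ b₁ - b₂ ∧ b₁ - b₂ ≤ D) ∧
    (∀ i, 1 ≤ i → i ≤ d → H i i ≤ D - m i) ∧
    (∀ i, 1 ≤ i → i ≤ d → H i i + δH (m i) 0 ≤ D) := by
  have δbound : ∀ b₁ b₂ : ℕ, b₂ ≤ b₁ → δH b₁ b₂ ≤ b₁ - b₂ := by
    intro b₁ b₂ h
    rw [hδH]
    split
    · exact padicValNat_factorial_add_one_le hp (by omega)
    · exact Nat.zero_le _
  have key : ∀ k i, 1 ≤ i → i ≤ d - k → H i (d - k) ≤ D - m i := by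
    intro k
    induction k with
    | zero =>
      intro i h1 h2
      simp only [Nat.sub_zero] at h2 ⊢
      rw [hHd i h1 h2]
      exact Nat.zero_le _
    | succ k ih =>
      intro i h1 h2
      by_cases hk : d ≤ k
      · omega
      · have hr1 : (1:ℕ) ≤ d - k := by omega
        have hrd : d - k ≤ d := by omega
        have heq : d - (k + 1) = (d - k) - 1 := by omega
        rw [heq, hrec i (d - k) h1 (by omega) hrd]
        have hH1 : H i (d - k) ≤ D - m i := ih i h1 (by omega)
        split
        · rename_i hmle
          have hH2 : H (d - k) (d - k) ≤ D - m (d - k) := ih (d - k) hr1 le_rfl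
          have hδ : δH (m (d - k)) (m i) ≤ m (d - k) - m i := δbound _ _ hmle
          have hmD : m (d - k) ≤ D := hm _ hr1 hrd
          simp only [max_le_iff]
          exact ⟨hH1, by omega⟩
        · exact hH1
  have hHii : ∀ i, 1 ≤ i → i ≤ d → H i i ≤ D - m i := by
    intro i h1 h2
    have := key (d - i) i h1 (by omega)
    rwa [Nat.sub_sub_self h2] at this
  refine ⟨fun b₁ b₂ h hD => ⟨δbound b₁ b₂ h, by omega⟩, hHii, ?_⟩
  intro i h1 h2
  have h3 := hHii i h1 h2
  have h4 : δH (m i) 0 ≤ m i - 0 := δbound _ _ (Nat.zero_le _)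
  have h5 := hm i h1 h2
  omega
end
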